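/- arXiv:1304.5228 — 19 statements merged into one kernel-verified Lean document; each statement's English description precedes it below -/
import Mathlib

section
/- Let n, ν ∈ ℕ, A ∈ ℂ^{n×n}, B ∈ ℂ^{n×1}, and τ ∈ ℂ be such that I − τA is invertible. Let S ∈ ℂ^{(ν+1)×(ν+1)} be the Jordan block with τ on the diagonal and 1 on the superdiagonal (S_{kk} = τ, S_{k,k+1} = 1, all other entries 0), and let L = (1, 0, …, 0) ∈ ℂ^{1×(ν+1)}. Then the Sylvester equation A Π S + B L = Π has a unique solution Π ∈ ℂ^{n×(ν+1)}, and its columns are given explicitly by Π_k = (I − τA)^{−(k+1)} A^k B for k = 0, …, ν. -/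
open Matrix

/-- Proposition 3.1(1): the Sylvester equation `A Π S + B L = Π`, with `S` the
Jordan block with `τ` on the diagonal and `1` on the superdiagonal and
`L = (1,0,…,0)`, has a unique solution, whose columns are
`Π_k = (I - τA)^{-(k+1)} A^k B`. -/
theorem stmt_0 (n ν : ℕ) (A : Matrix (Fin n) (Fin n) ℂ) (B : Matrix (Fin n) (Fin 1) ℂ)
    (τ : ℂ) (hA : IsUnit ((1 : Matrix (Fin n) (Fin n) ℂ) - τ • A))
    (S : Matrix (Fin (ν + 1)) (Fin (ν + 1)) ℂ)
    (hS : ∀ i j, S i j = if i = j then τ else if (i : ℕ) + 1 = (j : ℕ) then 1 else 0)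
    (L : Matrix (Fin 1) (Fin (ν + 1)) ℂ)
    (hL : ∀ u j, L u j = if j = 0 then 1 else 0) :
    ∀ Φ : Matrix (Fin n) (Fin (ν + 1)) ℂ,
      A * Φ * S + B * L = Φ ↔
        ∀ (k : Fin (ν + 1)) (i : Fin n),
          Φ i k = ((((1 : Matrix (Fin n) (Fin n) ℂ) - τ • A)⁻¹) ^ ((k : ℕ) + 1)
              * A ^ (k : ℕ) * B) i 0 := by
  intro Φ
  set M : Matrix (Fin n) (Fin n) ℂ := 1 - τ • A with hMdef
  have hdet : IsUnit M.det := (Matrix.isUnit_iff_isUnit_det M).mp hA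
  have hMinv : M * M⁻¹ = 1 := Matrix.mul_nonsing_inv M hdet
  have hinvM : M⁻¹ * M = 1 := Matrix.nonsing_inv_mul M hdet
  have hAM : A * M = M * A := by
    simp only [hMdef, Matrix.mul_sub, Matrix.sub_mul, Matrix.mul_one, Matrix.one_mul,
      Matrix.mul_smul, Matrix.smul_mul]
  have hAMi : Commute A M⁻¹ := by
    show A * M⁻¹ = M⁻¹ * A
    calc A * M⁻¹ = M⁻¹ * M * (A * M⁻¹) := by rw [hinvM, Matrix.one_mul]
      _ = M⁻¹ * (M * A * M⁻¹) := by simp only [Matrix.mul_assoc]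
      _ = M⁻¹ * (A * M * M⁻¹) := by rw [← hAM]
      _ = M⁻¹ * A := by rw [Matrix.mul_assoc A M M⁻¹, hMinv, Matrix.mul_one]
  set F : ℕ → Matrix (Fin n) (Fin 1) ℂ := fun k => M⁻¹ ^ (k + 1) * A ^ k * B with hF
  have key1 : M * F 0 = B := by
    show M * (M⁻¹ ^ (0 + 1) * A ^ 0 * B) = B
    rw [zero_add, pow_one, pow_zero, Matrix.mul_one, ← Matrix.mul_assoc, hMinv, Matrix.one_mul]
  have key2 : ∀ k : ℕ, M * F (k + 1) = A * F k := by
    intro k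
    have hp : M⁻¹ ^ (k + 2) = M⁻¹ * M⁻¹ ^ (k + 1) := pow_succ' _ (k + 1)
    have h1 : M * M⁻¹ ^ (k + 2) = M⁻¹ ^ (k + 1) := by
      rw [hp, ← Matrix.mul_assoc, hMinv, Matrix.one_mul]
    have h2 : A * M⁻¹ ^ (k + 1) = M⁻¹ ^ (k + 1) * A := (hAMi.pow_right (k + 1)).eq
    calc M * F (k + 1) = M * M⁻¹ ^ (k + 2) * A ^ (k + 1) * B := by
          show M * (M⁻¹ ^ (k + 1 + 1) * A ^ (k + 1) * B) = _
          simp only [← Matrix.mul_assoc]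
      _ = M⁻¹ ^ (k + 1) * A ^ (k + 1) * B := by rw [h1]
      _ = A * F k := by
          show _ = A * (M⁻¹ ^ (k + 1) * A ^ k * B)
          rw [← Matrix.mul_assoc, ← Matrix.mul_assoc, h2,
            Matrix.mul_assoc (M⁻¹ ^ (k + 1)) A (A ^ k), ← pow_succ']
  -- entrywise form of the equation
  have hBL : ∀ (i : Fin n) (k : Fin (ν + 1)), (B * L) i k = if k = 0 then B i 0 else 0 := by
    intro i k
    rw [Matrix.mul_apply, Fin.sum_univ_one, hL]
    by_cases h : k = 0 <;> simp [h]
  have hS' : ∀ (i : Fin n) (k : Fin (ν + 1)), (A * Φ * S) i k =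
      τ * (A * Φ) i k + ∑ j : Fin (ν + 1), (if (j : ℕ) + 1 = (k : ℕ) then (A * Φ) i j else 0) := by
    intro i k
    rw [Matrix.mul_apply]
    have hterm : ∀ j : Fin (ν + 1), (A * Φ) i j * S j k =
        (if j = k then τ * (A * Φ) i j else 0)
          + (if (j : ℕ) + 1 = (k : ℕ) then (A * Φ) i j else 0) := by
      intro j
      rw [hS]
      by_cases h1 : j = k
      · subst h1
        have : ¬((j : ℕ) + 1 = (j : ℕ)) := by omega
        simp [this, mul_comm]
      · have h1' : ¬((j : ℕ) = (k : ℕ)) := fun hc => h1 (Fin.ext hc)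
        by_cases h2 : (j : ℕ) + 1 = (k : ℕ) <;> simp [h1, h2]
    rw [Finset.sum_congr rfl (fun j _ => hterm j), Finset.sum_add_distrib]
    congr 1
    simp
  have hs0 : ∀ (i : Fin n) (k : Fin (ν + 1)), (k : ℕ) = 0 →
      ∑ j : Fin (ν + 1), (if (j : ℕ) + 1 = (k : ℕ) then (A * Φ) i j else 0) = 0 := by
    intro i k hk
    apply Finset.sum_eq_zero
    intro j _
    have : ¬((j : ℕ) + 1 = (k : ℕ)) := by omega
    simp [this]
  have hs1 : ∀ (i : Fin n) (m : ℕ) (hm : m + 1 < ν + 1),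
      ∑ j : Fin (ν + 1), (if (j : ℕ) + 1 = ((⟨m + 1, hm⟩ : Fin (ν + 1)) : ℕ) then (A * Φ) i j else 0)
        = (A * Φ) i ⟨m, by omega⟩ := by
    intro i m hm
    rw [Finset.sum_eq_single (⟨m, by omega⟩ : Fin (ν + 1))]
    · simp
    · intro j _ hj
      have hne : ¬((j : ℕ) + 1 = ((⟨m + 1, hm⟩ : Fin (ν + 1)) : ℕ)) := by
        intro hc
        apply hj
        apply Fin.ext
        simp only [Fin.val_mk] at hc ⊢
        omega
      rw [if_neg hne]
    · intro hmem
      exact absurd (Finset.mem_univ _) hmem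
  have heqw : (A * Φ * S + B * L = Φ) ↔ ∀ (i : Fin n) (k : Fin (ν + 1)),
      τ * (A * Φ) i k + (∑ j : Fin (ν + 1), (if (j : ℕ) + 1 = (k : ℕ) then (A * Φ) i j else 0))
        + (if k = 0 then B i 0 else 0) = Φ i k := by
    rw [← Matrix.ext_iff]
    constructor
    · intro h i k
      have := h i k
      rwa [Matrix.add_apply, hS', hBL] at this
    · intro h i k
      rw [Matrix.add_apply, hS', hBL]
      exact h i k
  -- columns
  set colΦ : Fin (ν + 1) → Matrix (Fin n) (Fin 1) ℂ :=
    fun k => Matrix.of fun i (_ : Fin 1) => Φ i k with hcolΦ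
  have hAcol : ∀ (k : Fin (ν + 1)) (i : Fin n), (A * colΦ k) i 0 = (A * Φ) i k := by
    intro k i
    simp [hcolΦ, Matrix.mul_apply]
  have hMX : ∀ (X : Matrix (Fin n) (Fin 1) ℂ) (i : Fin n),
      (M * X) i 0 = X i 0 - τ * (A * X) i 0 := by
    intro X i
    rw [hMdef, Matrix.sub_mul, Matrix.smul_mul, Matrix.one_mul, Matrix.sub_apply,
      Matrix.smul_apply, smul_eq_mul]
  have hcancel : ∀ X Y : Matrix (Fin n) (Fin 1) ℂ, M * X = M * Y → X = Y := by
    intro X Y h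
    calc X = M⁻¹ * (M * X) := by rw [← Matrix.mul_assoc, hinvM, Matrix.one_mul]
      _ = M⁻¹ * (M * Y) := by rw [h]
      _ = Y := by rw [← Matrix.mul_assoc, hinvM, Matrix.one_mul]
  constructor
  · intro heq
    have h := heqw.mp heq
    have H : ∀ (m : ℕ) (hm : m < ν + 1), colΦ ⟨m, hm⟩ = F m := by
      intro m
      induction m with
      | zero =>
        intro hm
        apply hcancel _ _ (?_ : M * colΦ ⟨0, hm⟩ = M * F 0)
        rw [key1]
        ext i j
        have hj : j = 0 := Subsingleton.elim j 0
        subst hj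
        rw [hMX]
        have hcv : (colΦ (⟨0, hm⟩ : Fin (ν + 1))) i 0 = Φ i ⟨0, hm⟩ := rfl
        rw [hcv, hAcol]
        have heq0 := h i ⟨0, hm⟩
        have h0 : (⟨0, hm⟩ : Fin (ν + 1)) = 0 := Fin.ext (by simp)
        rw [hs0 i ⟨0, hm⟩ rfl, add_zero, if_pos h0] at heq0
        linear_combination -heq0
      | succ m ih =>
        intro hm
        have hm' : m < ν + 1 := by omega
        apply hcancel _ _ (?_ : M * colΦ ⟨m + 1, hm⟩ = M * F (m + 1))
        rw [key2]
        ext i j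
        have hj : j = 0 := Subsingleton.elim j 0
        subst hj
        rw [hMX]
        have hcv : (colΦ (⟨m + 1, hm⟩ : Fin (ν + 1))) i 0 = Φ i ⟨m + 1, hm⟩ := rfl
        rw [hcv, hAcol]
        have hstep := h i ⟨m + 1, hm⟩
        rw [hs1 i m hm] at hstep
        have hne : (⟨m + 1, hm⟩ : Fin (ν + 1)) ≠ 0 := by
          intro hc
          have := congrArg Fin.val hc
          simp only [Fin.val_mk, Fin.val_zero] at this
          omega
        rw [if_neg hne, add_zero] at hstep
        have h2 : (A * Φ) i ⟨m, by omega⟩ = (A * colΦ ⟨m, hm'⟩) i 0 := (hAcol _ i).symm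
        rw [h2, ih hm'] at hstep
        linear_combination -hstep
    intro k i
    have hk : (⟨(k : ℕ), k.isLt⟩ : Fin (ν + 1)) = k := Fin.eta k k.isLt
    have := congrFun (congrFun (H (k : ℕ) k.isLt) i) 0
    rw [hk] at this
    exact this
  · intro h
    have hcols : ∀ k : Fin (ν + 1), colΦ k = F (k : ℕ) := by
      intro k
      ext i j
      have hj : j = 0 := Subsingleton.elim j 0
      subst hj
      exact h k i
    rw [heqw]
    intro i k
    have hAk : (A * Φ) i k = (A * F (k : ℕ)) i 0 := by
      rw [← hAcol k i, hcols k]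
    have hΦk : Φ i k = F (k : ℕ) i 0 := h k i
    obtain ⟨kv, hk⟩ := k
    cases kv with
    | zero =>
      have h0 : (⟨0, hk⟩ : Fin (ν + 1)) = 0 := Fin.ext (by simp)
      rw [hs0 i ⟨0, hk⟩ rfl, add_zero, if_pos h0, hAk, hΦk]
      have hkey := congrFun (congrFun key1 i) 0
      rw [hMX] at hkey
      simp only [Fin.val_mk]
      linear_combination -hkey
    | succ m =>
      have hne : (⟨m + 1, hk⟩ : Fin (ν + 1)) ≠ 0 := by
        intro hc
        have := congrArg Fin.val hc
        simp only [Fin.val_mk, Fin.val_zero] at this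
        omega
      rw [hs1 i m hk, if_neg hne, add_zero, hAk, hΦk]
      have hm' : m < ν + 1 := by omega
      have hA2 : (A * Φ) i ⟨m, by omega⟩ = (A * F m) i 0 := by
        rw [← hAcol ⟨m, hm'⟩ i, hcols ⟨m, hm'⟩]
      rw [hA2]
      have hkey := congrFun (congrFun (key2 m) i) 0
      rw [hMX] at hkey
      simp only [Fin.val_mk]
      linear_combination -hkey
end

section
/- Let n, ν ∈ ℕ, A ∈ ℂ^{n×n}, B ∈ ℂ^{n×1}, and τ ∈ ℂ be such that I − τA is invertible. Let S ∈ ℂ^{(ν+1)×(ν+1)} be the Jordan block with τ on the diagonal and 1 on the superdiagonal, and let L = (1, 0, …, 0) ∈ ℂ^{1×(ν+1)}. Then the Sylvester equation A Π̄ S + B L S = Π̄ has a unique solution Π̄ ∈ ℂ^{n×(ν+1)}, and its columns are given explicitly by Π̄_0 = τ (I − τA)^{−1} B and Π̄_k = τ (I − τA)^{−(k+1)} A^k B + (I − τA)^{−k} A^{k−1} B for k = 1, …, ν. -/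
open Matrix

/-- Proposition 3.1(2): the Sylvester equation `A Π̄ S + B L S = Π̄`, with `S` the
Jordan block with `τ` on the diagonal and `1` on the superdiagonal and
`L = (1,0,…,0)`, has a unique solution, whose columns are
`Π̄_0 = τ(I - τA)^{-1} B` and
`Π̄_k = τ(I - τA)^{-(k+1)} A^k B + (I - τA)^{-k} A^{k-1} B` for `k ≥ 1`. -/
theorem stmt_1 (n ν : ℕ) (A : Matrix (Fin n) (Fin n) ℂ) (B : Matrix (Fin n) (Fin 1) ℂ)
    (τ : ℂ) (hA : IsUnit ((1 : Matrix (Fin n) (Fin n) ℂ) - τ • A))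
    (S : Matrix (Fin (ν + 1)) (Fin (ν + 1)) ℂ)
    (hS : ∀ i j, S i j = if i = j then τ else if (i : ℕ) + 1 = (j : ℕ) then 1 else 0)
    (L : Matrix (Fin 1) (Fin (ν + 1)) ℂ)
    (hL : ∀ u j, L u j = if j = 0 then 1 else 0) :
    ∀ Ψ : Matrix (Fin n) (Fin (ν + 1)) ℂ,
      A * Ψ * S + B * L * S = Ψ ↔
        ∀ (k : Fin (ν + 1)) (i : Fin n),
          Ψ i k =
            if (k : ℕ) = 0 then
              (τ • (((1 : Matrix (Fin n) (Fin n) ℂ) - τ • A)⁻¹ * B)) i 0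
            else
              (τ • ((((1 : Matrix (Fin n) (Fin n) ℂ) - τ • A)⁻¹) ^ ((k : ℕ) + 1)
                    * A ^ (k : ℕ) * B)
                + (((1 : Matrix (Fin n) (Fin n) ℂ) - τ • A)⁻¹) ^ (k : ℕ)
                    * A ^ ((k : ℕ) - 1) * B) i 0 := by
  intro Ψ
  set E : Matrix (Fin n) (Fin n) ℂ := (1 : Matrix (Fin n) (Fin n) ℂ) - τ • A with hE
  set M : Matrix (Fin n) (Fin n) ℂ := E⁻¹ with hM
  have hdet : IsUnit E.det := (Matrix.isUnit_iff_isUnit_det E).mp hA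
  have hME : M * E = 1 := Matrix.nonsing_inv_mul E hdet
  have hEM : E * M = 1 := Matrix.mul_nonsing_inv E hdet
  have hAE : A * E = E * A := by
    rw [hE]
    simp [Matrix.mul_sub, Matrix.sub_mul, Matrix.mul_smul, Matrix.smul_mul]
  have hAM : A * M = M * A := by
    calc A * M = (M * E) * A * M := by rw [hME, Matrix.one_mul]
    _ = M * (A * E) * M := by rw [Matrix.mul_assoc M E A, ← hAE, ← Matrix.mul_assoc]
    _ = M * A * (E * M) := by simp only [Matrix.mul_assoc]
    _ = M * A := by rw [hEM, Matrix.mul_one]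
  have hcommAM : Commute A M := hAM
  have hAMk : ∀ k : ℕ, A * M ^ k = M ^ k * A := fun k => (hcommAM.pow_right k).eq
  have hEMk : ∀ k : ℕ, E * M ^ (k + 1) = M ^ k := by
    intro k
    rw [pow_succ', ← Matrix.mul_assoc, hEM, Matrix.one_mul]
  -- the candidate columns
  set G : ℕ → Matrix (Fin n) (Fin 1) ℂ := fun k =>
    if k = 0 then τ • (M * B)
    else τ • (M ^ (k + 1) * A ^ k * B) + M ^ k * A ^ (k - 1) * B with hG
  have hG0 : E * G 0 = τ • B := by
    simp only [hG, if_pos rfl]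
    rw [Matrix.mul_smul, ← Matrix.mul_assoc, hEM, Matrix.one_mul]
  have hGrec : ∀ k : ℕ, E * G (k + 1) = A * G k + (if k = 0 then B else 0) := by
    intro k
    have h1 : G (k + 1) = τ • (M ^ (k + 2) * A ^ (k + 1) * B) + M ^ (k + 1) * A ^ k * B := by
      simp [hG]
    have hswap : ∀ p q : ℕ, A * (M ^ p * A ^ q * B) = M ^ p * A ^ (q + 1) * B := by
      intro p q
      rw [← Matrix.mul_assoc, ← Matrix.mul_assoc, hAMk p, Matrix.mul_assoc (M ^ p) A (A ^ q),
        ← pow_succ']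
    rw [h1, Matrix.mul_add, Matrix.mul_smul]
    simp only [← Matrix.mul_assoc]
    rw [hEMk (k + 1), hEMk k]
    cases k with
    | zero =>
      simp only [hG, if_pos rfl, pow_one, pow_zero, Matrix.one_mul, if_pos rfl]
      rw [Matrix.mul_smul]
      have h2 : A * (M * B) = M * A * B := by rw [← Matrix.mul_assoc, hAM]
      rw [h2]
      simp
    | succ m =>
      simp only [hG, if_neg (Nat.succ_ne_zero m), Nat.add_sub_cancel, if_neg (Nat.succ_ne_zero m)]
      rw [Matrix.mul_add, Matrix.mul_smul, add_zero, hswap (m + 2) (m + 1), hswap (m + 1) m]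
  -- column extraction
  set C : Fin (ν + 1) → Matrix (Fin n) (Fin 1) ℂ := fun j => Matrix.of fun i _ => Ψ i j with hC
  have hECΨ : ∀ (j : Fin (ν + 1)) (i : Fin n),
      (E * C j) i 0 = Ψ i j - τ * (A * Ψ) i j := by
    intro j i
    rw [hE]
    simp [Matrix.mul_apply, Matrix.sub_apply, Matrix.one_apply, sub_mul,
      Finset.sum_sub_distrib, Matrix.smul_apply, smul_eq_mul, Finset.mul_sum, mul_assoc,
      hC, Finset.sum_ite_eq]
  have hACΨ : ∀ (j : Fin (ν + 1)) (i : Fin n), (A * C j) i 0 = (A * Ψ) i j := by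
    intro j i
    simp [Matrix.mul_apply, hC]
  have hcancel : ∀ X Y : Matrix (Fin n) (Fin 1) ℂ, E * X = E * Y → X = Y := by
    intro X Y h
    have h2 := congrArg (fun Z => M * Z) h
    simpa only [← Matrix.mul_assoc, hME, Matrix.one_mul] using h2
  -- sum lemma
  have hsum : ∀ (f : Fin (ν + 1) → ℂ) (j : Fin (ν + 1)),
      (∑ m, f m * S m j) = τ * f j +
        (if hj : (j : ℕ) = 0 then 0
         else f ⟨(j : ℕ) - 1, lt_of_le_of_lt (Nat.sub_le _ _) j.isLt⟩) := by
    intro f j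
    have hterm : ∀ m : Fin (ν + 1), f m * S m j =
        (if m = j then τ * f m else 0) + (if (m : ℕ) + 1 = (j : ℕ) then f m else 0) := by
      intro m
      rw [hS]
      by_cases h1 : m = j
      · subst h1
        have h2 : ¬((m : ℕ) + 1 = (m : ℕ)) := by omega
        simp [h2, mul_comm]
      · simp only [if_neg h1]
        by_cases h2 : (m : ℕ) + 1 = (j : ℕ)
        · simp [h2]
        · simp [h2]
    rw [Finset.sum_congr rfl (fun m _ => hterm m), Finset.sum_add_distrib]
    congr 1
    · rw [Finset.sum_ite_eq' Finset.univ j (fun m => τ * f m), if_pos (Finset.mem_univ j)]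
    · rcases Nat.eq_zero_or_pos (j : ℕ) with hj | hj
      · rw [dif_pos hj]
        apply Finset.sum_eq_zero
        intro m _
        rw [if_neg]
        omega
      · rw [dif_neg (by omega)]
        rw [Finset.sum_eq_single (⟨(j : ℕ) - 1, lt_of_le_of_lt (Nat.sub_le _ _) j.isLt⟩ :
            Fin (ν + 1))]
        · rw [if_pos]
          simp
          omega
        · intro m _ hm
          rw [if_neg]
          intro hc
          exact hm (Fin.ext (by simp; omega))
        · intro hmem
          exact absurd (Finset.mem_univ _) hmem
  have hBLS : ∀ (i : Fin n) (j : Fin (ν + 1)), (B * L * S) i j = B i 0 * S 0 j := by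
    intro i j
    rw [Matrix.mul_assoc]
    have hLS : (L * S) 0 j = S 0 j := by
      rw [Matrix.mul_apply]
      simp only [hL, ite_mul, one_mul, zero_mul]
      rw [Finset.sum_ite_eq' Finset.univ 0 (fun m => S m j), if_pos (Finset.mem_univ _)]
    rw [Matrix.mul_apply, Fin.sum_univ_one, hLS]
  have hAΨS : ∀ (i : Fin n) (j : Fin (ν + 1)), (A * Ψ * S) i j =
      τ * (A * Ψ) i j + (if hj : (j : ℕ) = 0 then 0
        else (A * Ψ) i ⟨(j : ℕ) - 1, lt_of_le_of_lt (Nat.sub_le _ _) j.isLt⟩) := by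
    intro i j
    rw [Matrix.mul_apply]
    exact hsum (fun m => (A * Ψ) i m) j
  -- entrywise form of the equation
  have hiffEnt : (A * Ψ * S + B * L * S = Ψ) ↔
      ∀ (i : Fin n) (j : Fin (ν + 1)),
        τ * (A * Ψ) i j + (if hj : (j : ℕ) = 0 then 0
          else (A * Ψ) i ⟨(j : ℕ) - 1, lt_of_le_of_lt (Nat.sub_le _ _) j.isLt⟩)
          + B i 0 * S 0 j = Ψ i j := by
    constructor
    · intro h i j
      have h2 := congrFun (congrFun h i) j
      rw [Matrix.add_apply, hAΨS, hBLS] at h2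
      exact h2
    · intro h
      ext i j
      rw [Matrix.add_apply, hAΨS, hBLS]
      exact h i j
  have hS00 : S 0 0 = τ := by rw [hS]; simp
  have hS0succ : ∀ (m : ℕ) (hm : m + 1 < ν + 1),
      S 0 ⟨m + 1, hm⟩ = (if m = 0 then 1 else 0) := by
    intro m hm
    rw [hS]
    have h1 : ¬((0 : Fin (ν + 1)) = ⟨m + 1, hm⟩) := by
      intro h
      have := congrArg Fin.val h
      simp at this
    rw [if_neg h1]
    simp only [Fin.val_zero, zero_add]
    by_cases h2 : m = 0
    · subst h2; simp
    · rw [if_neg (by omega), if_neg h2]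
  constructor
  · -- forward
    intro h k i
    have hEnt := hiffEnt.mp h
    have main : ∀ (m : ℕ) (hm : m < ν + 1), C ⟨m, hm⟩ = G m := by
      intro m
      induction m with
      | zero =>
        intro hm
        apply hcancel
        rw [hG0]
        ext i u
        have hu : u = 0 := Subsingleton.elim u 0
        subst hu
        rw [hECΨ]
        have h2 := hEnt i ⟨0, hm⟩
        rw [dif_pos rfl] at h2
        have h3 : (⟨0, hm⟩ : Fin (ν + 1)) = 0 := rfl
        rw [h3] at h2 ⊢
        rw [hS00] at h2
        simp only [Matrix.smul_apply, smul_eq_mul]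
        linear_combination -h2
      | succ m ih =>
        intro hm
        have hm' : m < ν + 1 := by omega
        apply hcancel
        rw [hGrec m]
        ext i u
        have hu : u = 0 := Subsingleton.elim u 0
        subst hu
        rw [hECΨ]
        have h2 := hEnt i ⟨m + 1, hm⟩
        rw [dif_neg (by simp)] at h2
        rw [hS0succ m hm] at h2
        have h4 : (⟨(m + 1 : ℕ) - 1, lt_of_le_of_lt (Nat.sub_le _ _) (⟨m+1,hm⟩ : Fin (ν+1)).isLt⟩ :
            Fin (ν + 1)) = ⟨m, hm'⟩ := Fin.ext (by simp)
        rw [h4] at h2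
        rw [Matrix.add_apply]
        have h5 : (A * G m) i 0 = (A * Ψ) i ⟨m, hm'⟩ := by
          rw [← ih hm', hACΨ]
        rw [h5]
        by_cases h6 : m = 0
        · subst h6
          simp at h2 ⊢
          linear_combination -h2
        · rw [if_neg h6] at h2 ⊢
          simp only [Matrix.zero_apply]
          linear_combination -h2
    have hmain := congrFun (congrFun (main k.val k.isLt) i) 0
    have hk : (⟨k.val, k.isLt⟩ : Fin (ν + 1)) = k := Fin.eta k k.isLt
    rw [hk] at hmain
    have hCk : Ψ i k = C k i 0 := rfl
    rw [hCk, hmain]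
    simp only [hG]
    split_ifs <;> rfl
  · -- backward
    intro h
    have hCG : ∀ j : Fin (ν + 1), C j = G j.val := by
      intro j
      ext i u
      have hu : u = 0 := Subsingleton.elim u 0
      subst hu
      have h2 := h j i
      show Ψ i j = G j.val i 0
      rw [h2]
      simp only [hG]
      split_ifs <;> rfl
    apply hiffEnt.mpr
    intro i j
    obtain ⟨jv, hjlt⟩ := j
    cases jv with
    | zero =>
      rw [dif_pos rfl]
      have h0 : (⟨0, hjlt⟩ : Fin (ν + 1)) = 0 := rfl
      rw [h0, hS00]
      have h2 := hECΨ 0 i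
      rw [hCG 0] at h2
      have h3 : G (0 : Fin (ν + 1)).val = G 0 := rfl
      rw [h3, hG0] at h2
      simp only [Matrix.smul_apply, smul_eq_mul] at h2
      linear_combination h2
    | succ m =>
      have hm' : m < ν + 1 := by omega
      rw [dif_neg (by simp)]
      rw [hS0succ m hjlt]
      have h4 : (⟨(⟨m + 1, hjlt⟩ : Fin (ν + 1)).val - 1,
          lt_of_le_of_lt (Nat.sub_le _ _) (⟨m + 1, hjlt⟩ : Fin (ν + 1)).isLt⟩ :
          Fin (ν + 1)) = ⟨m, hm'⟩ := Fin.ext (by simp)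
      rw [h4]
      have h2 := hECΨ ⟨m + 1, hjlt⟩ i
      rw [hCG ⟨m + 1, hjlt⟩] at h2
      have h3 : G (⟨m + 1, hjlt⟩ : Fin (ν + 1)).val = G (m + 1) := rfl
      rw [h3, hGrec m] at h2
      have h5 : (A * G m) i 0 = (A * Ψ) i ⟨m, hm'⟩ := by
        have h6 : G m = C ⟨m, hm'⟩ := (hCG ⟨m, hm'⟩).symm
        rw [h6, hACΨ]
      rw [Matrix.add_apply, h5] at h2
      by_cases h6 : m = 0
      · subst h6
        simp at h2 ⊢
        linear_combination h2
      · rw [if_neg h6] at h2 ⊢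
        simp only [Matrix.zero_apply] at h2
        linear_combination h2
end

section
/- Let n, ν ∈ ℕ, A ∈ ℂ^{n×n}, C ∈ ℂ^{1×n}, and τ ∈ ℂ be such that I − τA is invertible. Let 𝒬 ∈ ℂ^{(ν+1)×(ν+1)} be the lower Jordan block with τ on the diagonal and 1 on the subdiagonal (𝒬_{kk} = τ, 𝒬_{k+1,k} = 1, all other entries 0), and let ℛ = (1, 0, …, 0)ᵀ ∈ ℂ^{(ν+1)×1}. Then the Sylvester equation Υ = 𝒬 Υ A + ℛ C has a unique solution Υ ∈ ℂ^{(ν+1)×n}, and its rows are given explicitly by Υ_k = C A^k (I − τA)^{−(k+1)} for k = 0, …, ν. -/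
open Matrix

/-- Proposition 3.6(1): the dual Sylvester equation `Υ = 𝒬 Υ A + ℛ C`, with `𝒬` the
lower Jordan block with `τ` on the diagonal and `1` on the subdiagonal and
`ℛ = (1,0,…,0)ᵀ`, has a unique solution, whose rows are
`Υ_k = C A^k (I - τA)^{-(k+1)}`. -/
theorem stmt_2 (n ν : ℕ) (A : Matrix (Fin n) (Fin n) ℂ) (C : Matrix (Fin 1) (Fin n) ℂ)
    (τ : ℂ) (hA : IsUnit ((1 : Matrix (Fin n) (Fin n) ℂ) - τ • A))
    (Qc : Matrix (Fin (ν + 1)) (Fin (ν + 1)) ℂ)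
    (hQ : ∀ i j, Qc i j = if i = j then τ else if (j : ℕ) + 1 = (i : ℕ) then 1 else 0)
    (Rc : Matrix (Fin (ν + 1)) (Fin 1) ℂ)
    (hR : ∀ i u, Rc i u = if i = 0 then 1 else 0) :
    ∀ Υ : Matrix (Fin (ν + 1)) (Fin n) ℂ,
      Υ = Qc * Υ * A + Rc * C ↔
        ∀ (k : Fin (ν + 1)) (j : Fin n),
          Υ k j = (C * A ^ (k : ℕ)
              * (((1 : Matrix (Fin n) (Fin n) ℂ) - τ • A)⁻¹) ^ ((k : ℕ) + 1)) 0 j := by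
  intro Υ
  set M : Matrix (Fin n) (Fin n) ℂ := 1 - τ • A with hMdef
  set B : Matrix (Fin n) (Fin n) ℂ := M⁻¹ with hBdef
  have hdet : IsUnit M.det := (isUnit_iff_isUnit_det M).mp hA
  have hMB : M * B = 1 := mul_nonsing_inv M hdet
  have hBM : B * M = 1 := nonsing_inv_mul M hdet
  have hAM : A * M = M * A := by
    simp [hMdef, mul_sub, sub_mul, mul_smul_comm, smul_mul_assoc]
  have hAB : A * B = B * A := by
    calc A * B = B * M * A * B := by rw [hBM, one_mul]
    _ = B * (M * A) * B := by rw [mul_assoc B M A]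
    _ = B * (A * M) * B := by rw [hAM]
    _ = B * A * (M * B) := by rw [← mul_assoc B A M, mul_assoc (B * A) M B]
    _ = B * A := by rw [hMB, mul_one]
  -- key row equivalence
  have key : ∀ v w : Matrix (Fin 1) (Fin n) ℂ,
      v = τ • (v * A) + w ↔ v = w * B := by
    intro v w
    have hvM : v * M = v - τ • (v * A) := by
      rw [hMdef, Matrix.mul_sub, Matrix.mul_one, Matrix.mul_smul]
    constructor
    · intro h
      have hw : w = v - τ • (v * A) := eq_sub_of_add_eq' h.symm
      have h2 : v * M = w := by rw [hvM, ← hw]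
      calc v = v * (M * B) := by rw [hMB, Matrix.mul_one]
      _ = v * M * B := by rw [Matrix.mul_assoc]
      _ = w * B := by rw [h2]
    · intro h
      have h2 : v * M = w := by rw [h, Matrix.mul_assoc, hBM, Matrix.mul_one]
      rw [hvM] at h2
      rw [sub_eq_iff_eq_add'] at h2
      exact h2
  -- rows of Υ as 1×n matrices
  set R : Fin (ν + 1) → Matrix (Fin 1) (Fin n) ℂ :=
    fun i => Matrix.of fun _ j => Υ i j with hRdef
  set F : Fin (ν + 1) → Matrix (Fin 1) (Fin n) ℂ :=
    fun k => C * A ^ (k : ℕ) * B ^ ((k : ℕ) + 1) with hFdef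
  set W : Fin (ν + 1) → Matrix (Fin 1) (Fin n) ℂ :=
    Fin.cases C (fun p => R p.castSucc * A) with hWdef
  -- entry computation for Qc * Υ
  have hQΥ : ∀ (i : Fin (ν + 1)) (m : Fin n),
      (Qc * Υ) i m = τ * Υ i m + (Fin.cases 0 (fun p => Υ p.castSucc m) i : ℂ) := by
    intro i m
    induction i using Fin.cases with
    | zero =>
        have hterm : ∀ l, Qc 0 l * Υ l m
            = if (0 : Fin (ν + 1)) = l then τ * Υ l m else 0 := by
          intro l
          rw [hQ]
          split_ifs with h1 h2 <;> simp_all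
        rw [Matrix.mul_apply, Finset.sum_congr rfl (fun l _ => hterm l),
          Finset.sum_ite_eq]
        simp
    | succ p =>
        have hterm : ∀ l, Qc p.succ l * Υ l m
            = (if p.succ = l then τ * Υ l m else 0)
              + (if p.castSucc = l then Υ l m else 0) := by
          intro l
          rw [hQ]
          split_ifs with h1 h2 h3 h3 <;>
            simp only [Fin.ext_iff, Fin.val_succ, Fin.val_castSucc] at * <;> simp <;> omega
        rw [Matrix.mul_apply, Finset.sum_congr rfl (fun l _ => hterm l),
          Finset.sum_add_distrib, Finset.sum_ite_eq, Finset.sum_ite_eq]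
        simp
  -- entry computation for Qc * Υ * A
  have hQΥA : ∀ (i : Fin (ν + 1)) (j : Fin n),
      (Qc * Υ * A) i j
        = τ * (R i * A) 0 j
          + (Fin.cases (0 : ℂ) (fun p => (R p.castSucc * A) 0 j) i) := by
    intro i j
    rw [Matrix.mul_apply]
    have hterm : ∀ m, (Qc * Υ) i m * A m j
        = τ * (Υ i m * A m j)
          + (Fin.cases (0 : ℂ) (fun p => Υ p.castSucc m) i) * A m j := by
      intro m; rw [hQΥ]; ring
    rw [Finset.sum_congr rfl (fun m _ => hterm m), Finset.sum_add_distrib,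
      ← Finset.mul_sum]
    have hfst : ∑ m, Υ i m * A m j = (R i * A) 0 j := by
      rw [Matrix.mul_apply]; rfl
    rw [hfst]
    congr 1
    induction i using Fin.cases with
    | zero => simp
    | succ p => simp [Matrix.mul_apply, hRdef]
  -- entry computation for Rc * C
  have hRcC : ∀ (i : Fin (ν + 1)) (j : Fin n),
      (Rc * C) i j = if i = 0 then C 0 j else 0 := by
    intro i j
    rw [Matrix.mul_apply, Fin.sum_univ_one, hR]
    split_ifs <;> simp
  have hWentry : ∀ (i : Fin (ν + 1)) (j : Fin n),
      (Fin.cases (0 : ℂ) (fun p => (R p.castSucc * A) 0 j) i) + (Rc * C) i j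
        = W i 0 j := by
    intro i j
    induction i using Fin.cases with
    | zero => simp [hRcC, hWdef]
    | succ p => simp [hRcC, hWdef, Fin.succ_ne_zero]
  have hEntry : ∀ (i : Fin (ν + 1)) (j : Fin n),
      (Qc * Υ * A + Rc * C) i j = (τ • (R i * A) + W i) 0 j := by
    intro i j
    rw [Matrix.add_apply, hQΥA, Matrix.add_apply, Matrix.smul_apply, smul_eq_mul,
      ← hWentry i j, add_assoc]
  have hP1 : (Υ = Qc * Υ * A + Rc * C) ↔ ∀ i, R i = τ • (R i * A) + W i := by
    constructor
    · intro h i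
      ext u j
      obtain rfl : u = (0 : Fin 1) := Subsingleton.elim _ _
      show Υ i j = _
      rw [← hEntry i j]
      exact Matrix.ext_iff.mpr h i j
    · intro h
      ext i j
      rw [hEntry i j]
      exact Matrix.ext_iff.mpr (h i) 0 j
  have hstep2 : (∀ i, R i = τ • (R i * A) + W i) ↔ ∀ i, R i = W i * B :=
    forall_congr' fun i => key (R i) (W i)
  have hFmul : ∀ k : ℕ,
      (C * A ^ k * B ^ (k + 1)) * A * B = C * A ^ (k + 1) * B ^ (k + 2) := by
    intro k
    have hc : A * B ^ (k + 1) = B ^ (k + 1) * A := (Commute.pow_right hAB (k + 1)).eq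
    calc C * A ^ k * B ^ (k + 1) * A * B
        = C * A ^ k * (B ^ (k + 1) * A) * B := by
          rw [Matrix.mul_assoc (C * A ^ k)]
      _ = C * A ^ k * (A * B ^ (k + 1)) * B := by rw [← hc]
      _ = C * A ^ (k + 1) * B ^ (k + 2) := by
          rw [pow_succ A k, pow_succ B (k + 1)]
          simp only [Matrix.mul_assoc]
  have hstep3 : (∀ i, R i = W i * B) ↔ ∀ k, R k = F k := by
    constructor
    · intro h k
      induction k using Fin.induction with
      | zero =>
          rw [h 0]
          simp [hWdef, hFdef, pow_one]
      | succ p ih =>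
          rw [h p.succ]
          have hw : W p.succ = R p.castSucc * A := by simp [hWdef]
          rw [hw, ih]
          simp only [hFdef, Fin.coe_castSucc, Fin.val_succ]
          exact hFmul p
    · intro h i
      induction i using Fin.cases with
      | zero =>
          rw [h 0]
          simp [hWdef, hFdef, pow_one]
      | succ p =>
          rw [h p.succ]
          have hw : W p.succ = R p.castSucc * A := by simp [hWdef]
          rw [hw, h p.castSucc]
          simp only [hFdef, Fin.coe_castSucc, Fin.val_succ]
          exact (hFmul p).symm
  constructor
  · intro h k j
    have hk : R k = F k := hstep3.mp (hstep2.mp (hP1.mp h)) k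
    have h2 := Matrix.ext_iff.mpr hk 0 j
    simpa [hRdef, hFdef] using h2
  · intro h
    refine hP1.mpr (hstep2.mpr (hstep3.mpr ?_))
    intro k
    ext u j
    obtain rfl : u = (0 : Fin 1) := Subsingleton.elim _ _
    show Υ k j = F k 0 j
    simp only [hFdef]
    exact h k j
end

section
/- Let n, ν ∈ ℕ with ν ≥ 1, A ∈ ℂ^{n×n}, B ∈ ℂ^{n×1}, C ∈ ℂ^{1×n}. Let S ∈ ℂ^{ν×ν} be the nilpotent upper shift matrix (S_{k,k+1} = 1, all other entries 0) and L = (1, 0, …, 0) ∈ ℂ^{1×ν}. Then the Sylvester equation A Π S + B L = Π has the unique solution Π = [B, AB, A²B, …, A^{ν−1}B] (the matrix whose k-th column is A^k B, k = 0, …, ν−1). Consequently the row vector C Π S equals (0, CB, CAB, …, CA^{ν−2}B), i.e., its entries are the first ν Markov parameters η_0(∞) = 0, η_k(∞) = C A^{k−1} B of the system (A, B, C). -/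
open Matrix

lemma shiftS_mul_zero {m : Type*} [Fintype m] {ν : ℕ}
    (S : Matrix (Fin ν) (Fin ν) ℂ)
    (hS : ∀ i j, S i j = if (i : ℕ) + 1 = (j : ℕ) then 1 else 0)
    (M : Matrix m (Fin ν) ℂ) (i : m) (j : Fin ν) (hj : (j : ℕ) = 0) :
    (M * S) i j = 0 := by
  rw [Matrix.mul_apply]
  apply Finset.sum_eq_zero
  intro k _
  rw [hS, if_neg (by omega), mul_zero]

lemma shiftS_mul_succ {m : Type*} [Fintype m] {ν : ℕ}
    (S : Matrix (Fin ν) (Fin ν) ℂ)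
    (hS : ∀ i j, S i j = if (i : ℕ) + 1 = (j : ℕ) then 1 else 0)
    (M : Matrix m (Fin ν) ℂ) (i : m) (j j' : Fin ν) (hj : (j : ℕ) = (j' : ℕ) + 1) :
    (M * S) i j = M i j' := by
  rw [Matrix.mul_apply]
  rw [Finset.sum_eq_single j']
  · rw [hS, if_pos (by omega), mul_one]
  · intro b _ hb
    rw [hS, if_neg, mul_zero]
    intro h
    exact hb (Fin.ext (by omega))
  · intro h; exact absurd (Finset.mem_univ j') h

/-- The `τ* = 0` case of Proposition 3.1: with `S` the nilpotent upper shift matrix and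
`L = (1,0,…,0)`, the Sylvester equation `A Π S + B L = Π` has the Krylov matrix
`Π = [B, AB, …, A^{ν-1}B]` as its unique solution, and the entries of `C Π S` are the
first `ν` Markov parameters `η_0(∞) = 0`, `η_k(∞) = C A^{k-1} B`. -/
theorem stmt_3 (n ν : ℕ) (hν : 1 ≤ ν)
    (A : Matrix (Fin n) (Fin n) ℂ) (B : Matrix (Fin n) (Fin 1) ℂ)
    (C : Matrix (Fin 1) (Fin n) ℂ)
    (S : Matrix (Fin ν) (Fin ν) ℂ)
    (hS : ∀ i j, S i j = if (i : ℕ) + 1 = (j : ℕ) then 1 else 0)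
    (L : Matrix (Fin 1) (Fin ν) ℂ)
    (hL : ∀ u j, L u j = if (j : ℕ) = 0 then 1 else 0)
    (K : Matrix (Fin n) (Fin ν) ℂ)
    (hK : ∀ i k, K i k = (A ^ (k : ℕ) * B) i 0) :
    (∀ Φ : Matrix (Fin n) (Fin ν) ℂ, A * Φ * S + B * L = Φ ↔ Φ = K) ∧
      (∀ j : Fin ν, (C * K * S) 0 j =
        if (j : ℕ) = 0 then 0 else (C * A ^ ((j : ℕ) - 1) * B) 0 0) := by
  have hBL : ∀ i (j : Fin ν), (B * L) i j = if (j : ℕ) = 0 then B i 0 else 0 := by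
    intro i j
    rw [Matrix.mul_apply, Fin.sum_univ_one, hL]
    by_cases h : (j : ℕ) = 0 <;> simp [h]
  -- key computation: (M * K) i j' = (M * (A^j' * B)) i 0 pattern
  have hAK : ∀ i (j' : Fin ν), (A * K) i j' = (A ^ ((j' : ℕ) + 1) * B) i 0 := by
    intro i j'
    rw [pow_succ', Matrix.mul_assoc, Matrix.mul_apply, Matrix.mul_apply]
    exact Finset.sum_congr rfl fun k _ => by rw [hK]
  constructor
  · intro Φ
    constructor
    · intro hΦ
      have key : ∀ m : ℕ, ∀ j : Fin ν, (j : ℕ) = m → ∀ i, Φ i j = K i j := by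
        intro m
        induction m with
        | zero =>
          intro j hj i
          have h1 : Φ i j = (A * Φ * S) i j + (B * L) i j := by
            conv_lhs => rw [← hΦ]
            rfl
          rw [h1, shiftS_mul_zero S hS (A * Φ) i j hj, hBL, if_pos hj, zero_add, hK, hj, pow_zero,
            Matrix.one_mul]
        | succ m ih =>
          intro j hj i
          have hm : m < ν := by omega
          set j' : Fin ν := ⟨m, hm⟩ with hj'
          have h1 : Φ i j = (A * Φ * S) i j + (B * L) i j := by
            conv_lhs => rw [← hΦ]
            rfl
          rw [h1, shiftS_mul_succ S hS (A * Φ) i j j' (by show (j:ℕ) = m + 1; omega),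
            hBL, if_neg (by omega), add_zero]
          have h2 : (A * Φ) i j' = (A * K) i j' := by
            rw [Matrix.mul_apply, Matrix.mul_apply]
            exact Finset.sum_congr rfl fun k _ => by rw [ih j' rfl k]
          rw [h2, hAK, hK, hj]
      ext i j
      exact key (j : ℕ) j rfl i
    · rintro rfl
      ext i j
      rw [Matrix.add_apply, hBL]
      by_cases h : (j : ℕ) = 0
      · rw [shiftS_mul_zero S hS _ i j h, if_pos h, zero_add, hK, h, pow_zero, Matrix.one_mul]
      · have hm : (j : ℕ) - 1 < ν := by omega
        set j' : Fin ν := ⟨(j : ℕ) - 1, hm⟩ with hj'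
        have he : ((j' : Fin ν) : ℕ) + 1 = (j : ℕ) := by simp [hj']; omega
        rw [shiftS_mul_succ S hS _ i j j' (by show (j:ℕ) = (j:ℕ) - 1 + 1; omega), if_neg h, add_zero,
          hAK, hK, he]
  · intro j
    by_cases h : (j : ℕ) = 0
    · rw [shiftS_mul_zero S hS _ 0 j h, if_pos h]
    · have hm : (j : ℕ) - 1 < ν := by omega
      set j' : Fin ν := ⟨(j : ℕ) - 1, hm⟩ with hj'
      rw [shiftS_mul_succ S hS _ 0 j j' (by show (j:ℕ) = (j:ℕ) - 1 + 1; omega), if_neg h]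
      rw [Matrix.mul_assoc, Matrix.mul_apply, Matrix.mul_apply]
      exact Finset.sum_congr rfl fun k _ => by rw [hK]
end

section
/- Let A ∈ ℂ^{n×n}, B ∈ ℂ^{n×1}, C ∈ ℂ^{1×n}, S ∈ ℂ^{ν×ν}, L ∈ ℂ^{1×ν}, and let Π ∈ ℂ^{n×ν} satisfy A Π S + B L = Π. Suppose V, W ∈ ℂ^{n×ν} satisfy W* V = I_ν and P ∈ ℂ^{ν×ν} is invertible with Π = V P. Then the projected model (F, G, H) = (W* A V, W* B, C V) satisfies the moment matching conditions: C V P S = C Π S and (W* A V) P S + (W* B) L = P. -/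
open Matrix

/-- Proposition 3.12(1): if `Π` solves `A Π S + B L = Π`, `W* V = I` and `Π = V P` with
`P` invertible, then the projected model `(W* A V, W* B, C V)` satisfies the moment
matching conditions `C V P S = C Π S` and `(W* A V) P S + (W* B) L = P`. -/
theorem stmt_4 (n ν : ℕ) (A : Matrix (Fin n) (Fin n) ℂ) (B : Matrix (Fin n) (Fin 1) ℂ)
    (C : Matrix (Fin 1) (Fin n) ℂ) (S : Matrix (Fin ν) (Fin ν) ℂ)
    (L : Matrix (Fin 1) (Fin ν) ℂ)
    (Φ : Matrix (Fin n) (Fin ν) ℂ) (hΦ : A * Φ * S + B * L = Φ)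
    (V W : Matrix (Fin n) (Fin ν) ℂ) (hWV : Wᴴ * V = 1)
    (P : Matrix (Fin ν) (Fin ν) ℂ) (hP : IsUnit P) (hVP : Φ = V * P) :
    C * V * P * S = C * Φ * S ∧ (Wᴴ * A * V) * P * S + (Wᴴ * B) * L = P := by
  constructor
  · rw [hVP]; simp only [Matrix.mul_assoc]
  · have h : Wᴴ * (A * Φ * S + B * L) = Wᴴ * Φ := by rw [hΦ]
    rw [hVP] at h
    calc (Wᴴ * A * V) * P * S + (Wᴴ * B) * L
        = Wᴴ * (A * (V * P) * S + B * L) := by simp only [Matrix.mul_add, Matrix.mul_assoc]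
      _ = Wᴴ * (V * P) := h
      _ = (Wᴴ * V) * P := by rw [Matrix.mul_assoc]
      _ = P := by rw [hWV, Matrix.one_mul]
end

section
/- Let A ∈ ℂ^{n×n}, B ∈ ℂ^{n×1}, C ∈ ℂ^{1×n}, 𝒬 ∈ ℂ^{ν×ν}, ℛ ∈ ℂ^{ν×1}, and let Υ ∈ ℂ^{ν×n} satisfy Υ = 𝒬 Υ A + ℛ C. Suppose W, V ∈ ℂ^{n×ν} satisfy W* V = I_ν and P ∈ ℂ^{ν×ν} is invertible with Υ = P W*. Then the projected model (E, F, G, H) = (I, W* A V, W* B, C V) satisfies the dual moment matching conditions: 𝒬 P (W* A V) + ℛ (C V) = P and 𝒬 P (W* B) = 𝒬 Υ B. -/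
open Matrix

/-- Proposition 3.12(2): if `Υ` solves `Υ = 𝒬 Υ A + ℛ C`, `W* V = I` and `Υ = P W*` with
`P` invertible, then the projected model `(I, W* A V, W* B, C V)` satisfies the dual
moment matching conditions `𝒬 P (W* A V) + ℛ (C V) = P` and `𝒬 P (W* B) = 𝒬 Υ B`. -/
theorem stmt_5 (n ν : ℕ) (A : Matrix (Fin n) (Fin n) ℂ) (B : Matrix (Fin n) (Fin 1) ℂ)
    (C : Matrix (Fin 1) (Fin n) ℂ) (Qc : Matrix (Fin ν) (Fin ν) ℂ)
    (Rc : Matrix (Fin ν) (Fin 1) ℂ)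
    (Υ : Matrix (Fin ν) (Fin n) ℂ) (hΥ : Υ = Qc * Υ * A + Rc * C)
    (W V : Matrix (Fin n) (Fin ν) ℂ) (hWV : Wᴴ * V = 1)
    (P : Matrix (Fin ν) (Fin ν) ℂ) (hP : IsUnit P) (hPW : Υ = P * Wᴴ) :
    Qc * P * (Wᴴ * A * V) + Rc * (C * V) = P ∧ Qc * P * (Wᴴ * B) = Qc * Υ * B := by
  constructor
  · calc Qc * P * (Wᴴ * A * V) + Rc * (C * V)
        = (Qc * (P * Wᴴ) * A + Rc * C) * V := by
          simp only [Matrix.add_mul, Matrix.mul_assoc]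
      _ = Υ * V := by rw [← hPW, ← hΥ]
      _ = P * (Wᴴ * V) := by rw [hPW, Matrix.mul_assoc]
      _ = P := by rw [hWV, Matrix.mul_one]
  · rw [hPW]; simp only [Matrix.mul_assoc]
end

section
/- Let 𝒬 ∈ ℂ^{ν×ν}, ℛ ∈ ℂ^{ν×1}, H ∈ ℂ^{1×ν}, and let τ ∈ ℂ be an eigenvalue of 𝒬 (i.e., τI − 𝒬 is not invertible). If M := τI − 𝒬 + ℛH is invertible, then H M^{−1} ℛ = 1 (as a 1×1 matrix). -/
open Matrix

/-- Key step in the proof of Proposition 3.10: if `τ` is an eigenvalue of `𝒬`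
(`τI - 𝒬` not invertible) and `M = τI - 𝒬 + ℛH` is invertible, then
`H M⁻¹ ℛ = 1` as a `1 × 1` matrix. -/
theorem stmt_6 (ν : ℕ) (Qc : Matrix (Fin ν) (Fin ν) ℂ) (Rc : Matrix (Fin ν) (Fin 1) ℂ)
    (H : Matrix (Fin 1) (Fin ν) ℂ) (τ : ℂ)
    (hτ : ¬ IsUnit (τ • (1 : Matrix (Fin ν) (Fin ν) ℂ) - Qc))
    (hM : IsUnit (τ • (1 : Matrix (Fin ν) (Fin ν) ℂ) - Qc + Rc * H)) :
    H * (τ • (1 : Matrix (Fin ν) (Fin ν) ℂ) - Qc + Rc * H)⁻¹ * Rc = 1 := by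
  set M : Matrix (Fin ν) (Fin ν) ℂ := τ • (1 : Matrix (Fin ν) (Fin ν) ℂ) - Qc + Rc * H with hMdef
  have hMdet : IsUnit M.det := (isUnit_iff_isUnit_det M).mp hM
  have hA : τ • (1 : Matrix (Fin ν) (Fin ν) ℂ) - Qc = M + (-Rc) * H := by
    rw [hMdef, Matrix.neg_mul]; abel
  have hdet : (τ • (1 : Matrix (Fin ν) (Fin ν) ℂ) - Qc).det
      = M.det * (1 + H * M⁻¹ * (-Rc)).det := by
    rw [hA, det_add_mul (-Rc) H hMdet]
  have hAdet : (τ • (1 : Matrix (Fin ν) (Fin ν) ℂ) - Qc).det = 0 := by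
    by_contra h
    exact hτ ((isUnit_iff_isUnit_det _).mpr (isUnit_iff_ne_zero.mpr h))
  have h0 : (1 + H * M⁻¹ * (-Rc)).det = 0 := by
    rcases mul_eq_zero.mp (hdet ▸ hAdet) with h | h
    · exact absurd h (isUnit_iff_ne_zero.mp hMdet)
    · exact h
  have h1 : (1 : ℂ) + (H * M⁻¹ * (-Rc)) 0 0 = 0 := by
    have := h0
    rw [det_fin_one] at this
    simpa using this
  have hs : (H * M⁻¹ * Rc) 0 0 = 1 := by
    have : (H * M⁻¹ * (-Rc)) 0 0 = -((H * M⁻¹ * Rc) 0 0) := by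
      rw [Matrix.mul_neg]; simp
    rw [this] at h1; linear_combination -h1
  ext i j
  fin_cases i; fin_cases j
  simpa using hs
end

section
/- Let A ∈ ℂ^{n×n}, B ∈ ℂ^{n×1}, C ∈ ℂ^{1×n}, 𝒬 ∈ ℂ^{ν×ν}, ℛ ∈ ℂ^{ν×1}, H ∈ ℂ^{1×ν}, and let Υ ∈ ℂ^{ν×n} satisfy Υ = 𝒬 Υ A + ℛ C. Let τ ∈ ℂ be such that I − τA is invertible and M := τI − 𝒬 + ℛH is invertible. Then the approximation error factorizes as: τ·C(I − τA)^{−1}B − τ·H M^{−1} Υ B = (I₁ − H M^{−1} ℛ) · (C + H Υ A)(I − τA)^{−1} B · τ, where I₁ is the 1×1 identity. -/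
open Matrix

/-- The central factorization identity in the proof of Proposition 3.10:
`τ C(I-τA)⁻¹B - τ H M⁻¹ Υ B = (I₁ - H M⁻¹ ℛ)(C + HΥA)(I-τA)⁻¹B τ`,
where `M = τI - 𝒬 + ℛH` and `Υ = 𝒬 Υ A + ℛ C`. -/
theorem stmt_7 (n ν : ℕ) (A : Matrix (Fin n) (Fin n) ℂ) (B : Matrix (Fin n) (Fin 1) ℂ)
    (C : Matrix (Fin 1) (Fin n) ℂ) (Qc : Matrix (Fin ν) (Fin ν) ℂ)
    (Rc : Matrix (Fin ν) (Fin 1) ℂ) (H : Matrix (Fin 1) (Fin ν) ℂ)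
    (Υ : Matrix (Fin ν) (Fin n) ℂ) (hΥ : Υ = Qc * Υ * A + Rc * C)
    (τ : ℂ) (hA : IsUnit ((1 : Matrix (Fin n) (Fin n) ℂ) - τ • A))
    (hM : IsUnit (τ • (1 : Matrix (Fin ν) (Fin ν) ℂ) - Qc + Rc * H)) :
    τ • (C * ((1 : Matrix (Fin n) (Fin n) ℂ) - τ • A)⁻¹ * B)
        - τ • (H * (τ • (1 : Matrix (Fin ν) (Fin ν) ℂ) - Qc + Rc * H)⁻¹ * Υ * B)
      = τ • (((1 : Matrix (Fin 1) (Fin 1) ℂ)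
            - H * (τ • (1 : Matrix (Fin ν) (Fin ν) ℂ) - Qc + Rc * H)⁻¹ * Rc)
          * ((C + H * Υ * A) * ((1 : Matrix (Fin n) (Fin n) ℂ) - τ • A)⁻¹ * B)) := by
  set N := (1 : Matrix (Fin n) (Fin n) ℂ) - τ • A with hNdef
  set M := τ • (1 : Matrix (Fin ν) (Fin ν) ℂ) - Qc + Rc * H with hMdef
  have hNd : IsUnit N.det := (Matrix.isUnit_iff_isUnit_det N).mp hA
  have hMd : IsUnit M.det := (Matrix.isUnit_iff_isUnit_det M).mp hM
  have hNN : N * N⁻¹ = 1 := Matrix.mul_nonsing_inv N hNd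
  have hMM : M⁻¹ * M = 1 := Matrix.nonsing_inv_mul M hMd
  have h' : Qc * (Υ * A) = Υ - Rc * C := by
    rw [← Matrix.mul_assoc]; exact eq_sub_of_add_eq hΥ.symm
  have key : Υ * N = Rc * (C + H * Υ * A) - M * (Υ * A) := by
    rw [hNdef, hMdef, Matrix.mul_sub, Matrix.add_mul, Matrix.sub_mul, Matrix.smul_mul,
      Matrix.one_mul, Matrix.mul_add, h', Matrix.mul_assoc H Υ A, Matrix.mul_assoc Rc H (Υ * A)]
    simp only [Matrix.mul_smul, Matrix.smul_mul, Matrix.mul_one, Matrix.one_mul]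
    module
  have hΥeq : Υ = (Rc * (C + H * Υ * A) - M * (Υ * A)) * N⁻¹ := by
    calc Υ = Υ * (N * N⁻¹) := by rw [hNN, Matrix.mul_one]
    _ = (Υ * N) * N⁻¹ := by rw [Matrix.mul_assoc]
    _ = _ := by rw [key]
  have hMinv : M⁻¹ * Υ = (M⁻¹ * Rc * (C + H * Υ * A) - Υ * A) * N⁻¹ := by
    nth_rewrite 1 [hΥeq]
    rw [← Matrix.mul_assoc, Matrix.mul_sub, ← Matrix.mul_assoc M⁻¹ M (Υ * A), hMM,
      Matrix.one_mul, Matrix.mul_assoc M⁻¹ Rc (C + H * Υ * A)]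
  rw [Matrix.mul_assoc H M⁻¹ Υ, hMinv]
  simp only [Matrix.mul_add, Matrix.add_mul, Matrix.mul_sub, Matrix.sub_mul, Matrix.one_mul,
    Matrix.mul_one, Matrix.mul_assoc, Matrix.mul_smul, Matrix.smul_mul, smul_sub, smul_add]
  module
end

section
/- Let A ∈ ℂ^{n×n}, B ∈ ℂ^{n×1}, C ∈ ℂ^{1×n}, 𝒬 ∈ ℂ^{ν×ν}, ℛ ∈ ℂ^{ν×1}, H ∈ ℂ^{1×ν}, and let Υ ∈ ℂ^{ν×n} satisfy Υ = 𝒬 Υ A + ℛ C. Let τ ∈ ℂ be an eigenvalue of 𝒬 (τI − 𝒬 not invertible) such that I − τA and M := τI − 𝒬 + ℛH are invertible. Then τ·C(I − τA)^{−1}B = τ·H M^{−1} Υ B; that is, the descriptor reduced order model (E, F, G, H) = (𝒬 − ℛH, I, −ΥB, H) matches the moment of K̃(τ) = K(1/τ) at τ. -/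
open Matrix

/-- Proposition 3.10(1): if `Υ = 𝒬 Υ A + ℛ C`, `τ` is an eigenvalue of `𝒬`, and
`I - τA` and `M = τI - 𝒬 + ℛH` are invertible, then the descriptor reduced order model
`(𝒬 - ℛH, I, -ΥB, H)` matches the moment of `K̃(τ) = K(1/τ)` at `τ`:
`τ C(I-τA)⁻¹B = τ H M⁻¹ Υ B`. -/
theorem stmt_8 (n ν : ℕ) (A : Matrix (Fin n) (Fin n) ℂ) (B : Matrix (Fin n) (Fin 1) ℂ)
    (C : Matrix (Fin 1) (Fin n) ℂ) (Qc : Matrix (Fin ν) (Fin ν) ℂ)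
    (Rc : Matrix (Fin ν) (Fin 1) ℂ) (H : Matrix (Fin 1) (Fin ν) ℂ)
    (Υ : Matrix (Fin ν) (Fin n) ℂ) (hΥ : Υ = Qc * Υ * A + Rc * C)
    (τ : ℂ) (hτ : ¬ IsUnit (τ • (1 : Matrix (Fin ν) (Fin ν) ℂ) - Qc))
    (hA : IsUnit ((1 : Matrix (Fin n) (Fin n) ℂ) - τ • A))
    (hM : IsUnit (τ • (1 : Matrix (Fin ν) (Fin ν) ℂ) - Qc + Rc * H)) :
    τ • (C * ((1 : Matrix (Fin n) (Fin n) ℂ) - τ • A)⁻¹ * B)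
      = τ • (H * (τ • (1 : Matrix (Fin ν) (Fin ν) ℂ) - Qc + Rc * H)⁻¹ * Υ * B) := by
  set M : Matrix (Fin ν) (Fin ν) ℂ := τ • (1 : Matrix (Fin ν) (Fin ν) ℂ) - Qc + Rc * H with hMdef
  set D : Matrix (Fin n) (Fin n) ℂ := ((1 : Matrix (Fin n) (Fin n) ℂ) - τ • A)⁻¹ with hDdef
  have hMd : IsUnit M.det := (Matrix.isUnit_iff_isUnit_det _).mp hM
  have hAd : IsUnit ((1 : Matrix (Fin n) (Fin n) ℂ) - τ • A).det :=
    (Matrix.isUnit_iff_isUnit_det _).mp hA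
  have hMinv : M⁻¹ * M = 1 := Matrix.nonsing_inv_mul _ hMd
  -- det of τ•1 - Qc is zero
  have hdet0 : (τ • (1 : Matrix (Fin ν) (Fin ν) ℂ) - Qc).det = 0 := by
    by_contra h
    exact hτ ((Matrix.isUnit_iff_isUnit_det _).mpr (isUnit_iff_ne_zero.mpr h))
  have hsplit : (τ • (1 : Matrix (Fin ν) (Fin ν) ℂ) - Qc) = M - Rc * H := by
    rw [hMdef]; abel
  have key1 : M⁻¹ * (τ • (1 : Matrix (Fin ν) (Fin ν) ℂ) - Qc) = 1 - M⁻¹ * Rc * H := by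
    rw [hsplit, Matrix.mul_sub, hMinv, Matrix.mul_assoc]
  -- H * M⁻¹ * Rc = 1
  have hα : H * M⁻¹ * Rc = 1 := by
    have hd1 : (1 - M⁻¹ * Rc * H).det = 0 := by
      rw [← key1, Matrix.det_mul, hdet0, mul_zero]
    have hd2 : (1 - M⁻¹ * Rc * H).det = ((1 : Matrix (Fin 1) (Fin 1) ℂ) - H * (M⁻¹ * Rc)).det := by
      have := Matrix.det_one_add_mul_comm (-(M⁻¹ * Rc)) H
      simpa [Matrix.neg_mul, Matrix.mul_neg, sub_eq_add_neg, Matrix.mul_assoc] using this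
    have h00 : ((1 : Matrix (Fin 1) (Fin 1) ℂ) - H * (M⁻¹ * Rc)) 0 0 = 0 := by
      have h' : ((1 : Matrix (Fin 1) (Fin 1) ℂ) - H * (M⁻¹ * Rc)).det = 0 := by
        rw [← hd2]; exact hd1
      simpa [Matrix.det_fin_one] using h'
    ext i j
    have hi : i = 0 := Subsingleton.elim _ _
    have hj : j = 0 := Subsingleton.elim _ _
    subst hi; subst hj
    have : (1 : Matrix (Fin 1) (Fin 1) ℂ) 0 0 - (H * (M⁻¹ * Rc)) 0 0 = 0 := by
      simpa [Matrix.sub_apply] using h00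
    simp only [Matrix.one_apply_eq] at this ⊢
    have := sub_eq_zero.mp this
    rw [← Matrix.mul_assoc] at this
    exact this.symm
  -- Sylvester identity: Υ = (Rc*C - (τ•1 - Qc)*Υ*A) * D
  have hSyl : Υ = (Rc * C - (τ • (1 : Matrix (Fin ν) (Fin ν) ℂ) - Qc) * Υ * A) * D := by
    have h1 : Υ * ((1 : Matrix (Fin n) (Fin n) ℂ) - τ • A)
        = Rc * C - (τ • (1 : Matrix (Fin ν) (Fin ν) ℂ) - Qc) * Υ * A := by
      have e2 : (τ • (1 : Matrix (Fin ν) (Fin ν) ℂ) - Qc) * Υ * A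
          = τ • (Υ * A) - Qc * Υ * A := by
        simp only [Matrix.sub_mul, Matrix.smul_mul, Matrix.one_mul]
      rw [Matrix.mul_sub, Matrix.mul_one, Matrix.mul_smul, e2]
      nth_rewrite 1 [hΥ]
      abel
    calc Υ = Υ * (((1 : Matrix (Fin n) (Fin n) ℂ) - τ • A) * D) := by
            rw [hDdef, Matrix.mul_nonsing_inv _ hAd, Matrix.mul_one]
      _ = Υ * ((1 : Matrix (Fin n) (Fin n) ℂ) - τ • A) * D := by rw [Matrix.mul_assoc]
      _ = (Rc * C - (τ • (1 : Matrix (Fin ν) (Fin ν) ℂ) - Qc) * Υ * A) * D := by rw [h1]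
  -- main computation
  have main : H * M⁻¹ * Υ * B = C * D * B := by
    have hNQ : M⁻¹ * ((τ • (1 : Matrix (Fin ν) (Fin ν) ℂ) - Qc) * Υ * A)
        = Υ * A - M⁻¹ * Rc * (H * (Υ * A)) := by
      calc M⁻¹ * ((τ • (1 : Matrix (Fin ν) (Fin ν) ℂ) - Qc) * Υ * A)
          = (M⁻¹ * (τ • (1 : Matrix (Fin ν) (Fin ν) ℂ) - Qc)) * (Υ * A) := by
            rw [Matrix.mul_assoc, Matrix.mul_assoc]
        _ = (1 - M⁻¹ * Rc * H) * (Υ * A) := by rw [key1]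
        _ = Υ * A - M⁻¹ * Rc * (H * (Υ * A)) := by
            rw [Matrix.sub_mul, Matrix.one_mul, Matrix.mul_assoc]
    calc H * M⁻¹ * Υ * B
        = H * (M⁻¹ * ((Rc * C - (τ • (1 : Matrix (Fin ν) (Fin ν) ℂ) - Qc) * Υ * A) * D)) * B := by
          rw [Matrix.mul_assoc H M⁻¹ Υ]; nth_rewrite 1 [hSyl]; rfl
      _ = H * ((M⁻¹ * (Rc * C) - M⁻¹ * ((τ • (1 : Matrix (Fin ν) (Fin ν) ℂ) - Qc) * Υ * A)) * D) * B := by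
          rw [← Matrix.mul_assoc M⁻¹, Matrix.mul_sub]
      _ = H * ((M⁻¹ * (Rc * C) - (Υ * A - M⁻¹ * Rc * (H * (Υ * A)))) * D) * B := by
          rw [hNQ]
      _ = ((H * M⁻¹ * Rc) * C - H * (Υ * A) + (H * M⁻¹ * Rc) * (H * (Υ * A))) * D * B := by
          simp only [Matrix.mul_sub, Matrix.sub_mul, Matrix.mul_add, Matrix.add_mul,
            Matrix.mul_assoc]
          abel
      _ = C * D * B := by
          rw [hα, Matrix.one_mul, Matrix.one_mul]
          simp only [sub_add_cancel]
  rw [main]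
end

section
/- Let A ∈ ℂ^{n×n} (or ℝ^{n×n}), B ∈ ℂ^{n×1}, C ∈ ℂ^{1×n}, 𝒬 ∈ ℂ^{ν×ν}, ℛ ∈ ℂ^{ν×1}, and let Υ ∈ ℂ^{ν×n} satisfy Υ = 𝒬 Υ A + ℛ C. Suppose x : ℝ → ℂ^n, ω : ℝ → ℂ^ν, u : ℝ → ℂ are differentiable and satisfy for all t: A x′(t) = x(t) − B u(t) and ω′(t) = 𝒬 ω(t) + ℛ (C x′(t)). Then the signal d := ω − Υ x satisfies the linear ODE d′(t) = 𝒬 d(t) + 𝒬 Υ B u(t) for all t. -/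
open Matrix

/-- Computation preceding Theorem 3.8: if `Υ = 𝒬 Υ A + ℛ C`, the descriptor system
`A ẋ = x - B u` is interconnected with the generalized signal generator
`ω̇ = 𝒬 ω + ℛ (C ẋ)`, then `d := ω - Υ x` satisfies `d′ = 𝒬 d + 𝒬 Υ B u`. -/
theorem stmt_9 (n ν : ℕ) (A : Matrix (Fin n) (Fin n) ℂ) (B : Matrix (Fin n) (Fin 1) ℂ)
    (C : Matrix (Fin 1) (Fin n) ℂ) (Qc : Matrix (Fin ν) (Fin ν) ℂ)
    (Rc : Matrix (Fin ν) (Fin 1) ℂ)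
    (Υ : Matrix (Fin ν) (Fin n) ℂ) (hΥ : Υ = Qc * Υ * A + Rc * C)
    (x : ℝ → Fin n → ℂ) (ω : ℝ → Fin ν → ℂ) (u : ℝ → ℂ)
    (hx : Differentiable ℝ x) (hω : Differentiable ℝ ω) (hu : Differentiable ℝ u)
    (hxeq : ∀ t, A.mulVec (deriv x t) = x t - B.mulVec (fun _ => u t))
    (hωeq : ∀ t, deriv ω t = Qc.mulVec (ω t) + Rc.mulVec (C.mulVec (deriv x t))) :
    ∀ t, deriv (fun s => ω s - Υ.mulVec (x s)) t
      = Qc.mulVec (ω t - Υ.mulVec (x t)) + (Qc * Υ * B).mulVec (fun _ => u t) := by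
  intro t
  have hxd := (hx t).hasDerivAt
  have hΥx : HasDerivAt (fun s => Υ.mulVec (x s)) (Υ.mulVec (deriv x t)) t := by
    have h := ((Matrix.mulVecLin Υ).toContinuousLinearMap.restrictScalars ℝ).hasFDerivAt.comp_hasDerivAt t hxd
    simpa [Function.comp_def] using h
  have hd : HasDerivAt (fun s => ω s - Υ.mulVec (x s)) (deriv ω t - Υ.mulVec (deriv x t)) t :=
    (hω t).hasDerivAt.sub hΥx
  rw [hd.deriv, hωeq t]
  calc Qc.mulVec (ω t) + Rc.mulVec (C.mulVec (deriv x t)) - Υ.mulVec (deriv x t)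
      = Qc.mulVec (ω t) + Rc.mulVec (C.mulVec (deriv x t))
        - (Qc * Υ * A + Rc * C).mulVec (deriv x t) := by rw [← hΥ]
    _ = Qc.mulVec (ω t) - (Qc * Υ).mulVec (A.mulVec (deriv x t)) := by
        simp only [Matrix.add_mulVec, ← Matrix.mulVec_mulVec]
        abel
    _ = Qc.mulVec (ω t - Υ.mulVec (x t)) + (Qc * Υ * B).mulVec (fun _ => u t) := by
        rw [hxeq t]
        simp only [Matrix.mulVec_sub, ← Matrix.mulVec_mulVec]
        abel
end

section
/- Let A ∈ ℂ^{n×n}, B ∈ ℂ^{n×1}, C ∈ ℂ^{1×n}, S ∈ ℂ^{ν×ν}, L ∈ ℂ^{1×ν}. Assume every eigenvalue of A has strictly negative real part (in particular A is invertible) and every eigenvalue of S has zero real part, and let Π ∈ ℂ^{n×ν} satisfy A Π S + B L = Π. Suppose x : ℝ → ℂ^n and ω : ℝ → ℂ^ν are differentiable and satisfy for all t ≥ 0: ω′(t) = S ω(t) and A x′(t) = x(t) − B L ω(t), and set y(t) := C x′(t). Then y(t) − C Π S ω(t) → 0 as t → +∞; that is, the steady-state response of the output of the interconnection is C Π S ω(t).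 -/
open Matrix

open NormedSpace Filter Topology

attribute [local instance] Matrix.linftyOpNormedRing Matrix.linftyOpNormedAlgebra

namespace Stmt10Aux

noncomputable def mulVecCLM {n : ℕ} (w : Fin n → ℂ) :
    Matrix (Fin n) (Fin n) ℂ →L[ℝ] (Fin n → ℂ) :=
  LinearMap.toContinuousLinearMap
    { toFun := fun X => X.mulVec w
      map_add' := fun X Y => Matrix.add_mulVec X Y w
      map_smul' := fun c X => Matrix.smul_mulVec c X w }

@[simp] lemma mulVecCLM_apply {n : ℕ} (w : Fin n → ℂ) (X : Matrix (Fin n) (Fin n) ℂ) :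
    mulVecCLM w X = X.mulVec w := rfl

noncomputable def constMulVecCLM {a b : ℕ} (P : Matrix (Fin a) (Fin b) ℂ) :
    (Fin b → ℂ) →L[ℝ] (Fin a → ℂ) :=
  LinearMap.toContinuousLinearMap (P.mulVecLin.restrictScalars ℝ)

@[simp] lemma constMulVecCLM_apply {a b : ℕ} (P : Matrix (Fin a) (Fin b) ℂ) (u : Fin b → ℂ) :
    constMulVecCLM P u = P.mulVec u := rfl

lemma hasDerivAt_constMulVec {a b : ℕ} (P : Matrix (Fin a) (Fin b) ℂ)
    {g : ℝ → Fin b → ℂ} {g' : Fin b → ℂ} {t : ℝ} (hg : HasDerivAt g g' t) :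
    HasDerivAt (fun s => P.mulVec (g s)) (P.mulVec g') t := by
  exact ((constMulVecCLM P).hasFDerivAt.comp_hasDerivAt t hg)

lemma tendsto_aux (μ : ℂ) (hμ : μ.re < 0) (k : ℕ) :
    Tendsto (fun t : ℝ => Complex.exp (t * μ) * (t : ℂ) ^ k) atTop (𝓝 0) := by
  obtain ⟨a, ha, harel⟩ : ∃ a : ℝ, 0 < a ∧ μ.re = -a := ⟨-μ.re, by linarith, by ring⟩
  have hlin : Tendsto (fun t : ℝ => a * t) atTop atTop :=
    Tendsto.const_mul_atTop ha tendsto_id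
  have h1 : Tendsto (fun t : ℝ =>
      ((a * t) ^ k * Real.exp (-(a * t))) * (a⁻¹) ^ k) atTop (𝓝 0) := by
    have := ((Real.tendsto_pow_mul_exp_neg_atTop_nhds_zero k).comp hlin).mul_const ((a⁻¹) ^ k)
    simpa using this
  refine squeeze_zero_norm' ?_ h1
  filter_upwards [eventually_ge_atTop (0:ℝ)] with t ht
  have hak : a ^ k * (a⁻¹) ^ k = 1 := by
    rw [← mul_pow, mul_inv_cancel₀ (ne_of_gt ha), one_pow]
  have hnorm : ‖Complex.exp (↑t * μ) * (t : ℂ) ^ k‖ = Real.exp (t * μ.re) * t ^ k := by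
    rw [norm_mul, norm_pow, Complex.norm_exp,
      Complex.norm_real, Real.norm_eq_abs, abs_of_nonneg ht]
    congr 2
    simp [Complex.mul_re]
  rw [hnorm, harel]
  refine le_of_eq ?_
  have hexp : Real.exp (-(a * t)) = Real.exp (t * -a) := by ring_nf
  rw [hexp, mul_pow]
  linear_combination (-(Real.exp (t * -a) * t ^ k)) * hak


lemma key {n : ℕ} (M : Matrix (Fin n) (Fin n) ℂ)
    (hM : ∀ μ ∈ spectrum ℂ M, μ.re < 0) (v : Fin n → ℂ) :
    Tendsto (fun t : ℝ => (exp (t • M)).mulVec v) atTop (𝓝 0) := by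
  set f : Module.End ℂ (Fin n → ℂ) := Matrix.toLinAlgEquiv' M with hfdef
  have hv : v ∈ ⨆ μ : ℂ, f.maxGenEigenspace μ := by
    rw [Module.End.iSup_maxGenEigenspace_eq_top]; exact Submodule.mem_top
  refine Submodule.iSup_induction
    (motive := fun w => Tendsto (fun t : ℝ => (exp (t • M)).mulVec w) atTop (𝓝 0)) _ hv ?_ ?_ ?_
  · -- main case
    intro μ w hw
    by_cases hw0 : w = 0
    · subst hw0
      simpa [Matrix.mulVec_zero] using (tendsto_const_nhds :
        Tendsto (fun _ : ℝ => (0 : Fin n → ℂ)) atTop _)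
    obtain ⟨k, hk⟩ := (Module.End.mem_maxGenEigenspace _ _ _).mp hw
    have hk0 : 0 < k := by
      rcases Nat.eq_zero_or_pos k with h | h
      · exfalso; rw [h, pow_zero, Module.End.one_apply] at hk; exact hw0 hk
      · exact h
    -- μ is in the spectrum of M
    have hμspec : μ ∈ spectrum ℂ M := by
      have hgen : f.HasGenEigenvalue μ k := by
        rw [Module.End.hasGenEigenvalue_iff]
        intro hbot
        apply hw0
        have hmem : w ∈ f.genEigenspace μ (k : ℕ∞) :=
          Module.End.mem_genEigenspace_nat.mpr hk
        rw [hbot] at hmem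
        simpa using hmem
      have h1 := Module.End.hasEigenvalue_of_hasGenEigenvalue hgen
      have h2 := Module.End.hasEigenvalue_iff_mem_spectrum.mp h1
      rwa [hfdef, AlgEquiv.spectrum_eq Matrix.toLinAlgEquiv' M] at h2
    have hre : μ.re < 0 := hM μ hμspec
    set N : Matrix (Fin n) (Fin n) ℂ := M - μ • 1 with hN
    have hNw : ∀ j, k ≤ j → (N ^ j).mulVec w = 0 := by
      intro j hj
      obtain ⟨d, rfl⟩ := Nat.exists_eq_add_of_le hj
      have h3 : Matrix.toLinAlgEquiv' N = f - μ • 1 := by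
        rw [hN, map_sub, _root_.map_smul, _root_.map_one, hfdef]
      have h4 : (Matrix.toLinAlgEquiv' (N ^ (k + d))) w = 0 := by
        rw [map_pow, h3, add_comm k d, pow_add, Module.End.mul_apply, hk, map_zero]
      rwa [Matrix.toLinAlgEquiv'_apply] at h4
    -- split the exponential
    have hsplit : ∀ t : ℝ, exp (t • M) = Complex.exp (t * μ) • exp (t • N) := by
      intro t
      have hcomm : Commute (t • N) (t • (μ • (1 : Matrix (Fin n) (Fin n) ℂ))) :=
        (((Commute.one_right N).smul_right μ).smul_left t).smul_right t
      have hM' : t • M = t • N + t • (μ • (1 : Matrix (Fin n) (Fin n) ℂ)) := by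
        rw [← smul_add, hN]
        congr 1
        abel
      have h2 : t • (μ • (1 : Matrix (Fin n) (Fin n) ℂ)) =
          ((t : ℂ) * μ) • (1 : Matrix (Fin n) (Fin n) ℂ) := by
        rw [← smul_assoc]
        norm_num [Complex.real_smul]
      have h3 : exp (((t : ℂ) * μ) • (1 : Matrix (Fin n) (Fin n) ℂ)) =
          Complex.exp ((t : ℂ) * μ) • (1 : Matrix (Fin n) (Fin n) ℂ) := by
        have h3' := algebraMap_exp_comm (𝕂 := ℂ) (𝔸 := Matrix (Fin n) (Fin n) ℂ) ((t : ℂ) * μ)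
        rw [Algebra.algebraMap_eq_smul_one, Algebra.algebraMap_eq_smul_one,
          ← Complex.exp_eq_exp_ℂ] at h3'
        exact h3'.symm
      rw [hM', show exp (t • N + t • (μ • (1 : Matrix (Fin n) (Fin n) ℂ))) =
          exp (t • N) * exp (t • (μ • (1 : Matrix (Fin n) (Fin n) ℂ))) from
          NormedSpace.exp_add_of_commute hcomm, h2, h3, mul_smul_comm, mul_one]
    -- expand exp (t • N) applied to w as a finite sum
    have hexpN : ∀ t : ℝ, (exp (t • N)).mulVec w
        = ∑ j ∈ Finset.range k,
            ((Nat.factorial j : ℝ))⁻¹ • (t ^ j) • (N ^ j).mulVec w := by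
      intro t
      have hsum : Summable fun j : ℕ => ((Nat.factorial j : ℝ))⁻¹ • (t • N) ^ j :=
        expSeries_summable' (𝕂 := ℝ) (t • N)
      have hzero : ∀ j ∉ Finset.range k,
          mulVecCLM w (((Nat.factorial j : ℝ))⁻¹ • (t • N) ^ j) = 0 := by
        intro j hj
        have hj' : k ≤ j := le_of_not_gt fun h => hj (Finset.mem_range.mpr h)
        rw [smul_pow]
        simp [Matrix.smul_mulVec, hNw j hj']
      have h1 : (exp (t • N)).mulVec w
          = mulVecCLM w (∑' j : ℕ, ((Nat.factorial j : ℝ))⁻¹ • (t • N) ^ j) := by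
        rw [exp_eq_tsum ℝ]
        rfl
      rw [h1, (mulVecCLM w).map_tsum hsum, tsum_eq_sum hzero]
      refine Finset.sum_congr rfl fun j _ => ?_
      rw [smul_pow]
      simp [Matrix.smul_mulVec]
    -- final limit
    have heq : ∀ t : ℝ, (exp (t • M)).mulVec w
        = ∑ j ∈ Finset.range k,
            ((Nat.factorial j : ℝ))⁻¹ •
              ((Complex.exp (t * μ) * (t : ℂ) ^ j) • (N ^ j).mulVec w) := by
      intro t
      rw [hsplit t, Matrix.smul_mulVec, hexpN t, Finset.smul_sum]
      refine Finset.sum_congr rfl fun j _ => ?_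
      rw [smul_comm (Complex.exp (↑t * μ)) ((Nat.factorial j : ℝ))⁻¹]
      congr 1
      rw [← algebraMap_smul ℂ (t ^ j : ℝ) ((N ^ j).mulVec w), smul_smul]
      congr 1
      simp
    rw [show (fun t : ℝ => (exp (t • M)).mulVec w) = _ from funext heq]
    rw [show (0 : Fin n → ℂ) = ∑ _j ∈ Finset.range k, (0 : Fin n → ℂ) from by simp]
    refine tendsto_finset_sum _ fun j _ => ?_
    have h5 := ((tendsto_aux μ hre j).smul_const ((N ^ j).mulVec w)).const_smul
      ((Nat.factorial j : ℝ))⁻¹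
    simpa using h5
  · simpa [Matrix.mulVec_zero] using (tendsto_const_nhds :
      Tendsto (fun _ : ℝ => (0 : Fin n → ℂ)) atTop _)
  · intro a b ha hb
    have hab := ha.add hb
    simpa [Matrix.mulVec_add] using hab


end Stmt10Aux

open Stmt10Aux

/-- Theorem 3.5(i): if all eigenvalues of `A` have negative real part, all eigenvalues
of `S` have zero real part, `Π` solves `A Π S + B L = Π`, and for `t ≥ 0` the
interconnection `ω̇ = S ω`, `A ẋ = x - B L ω`, `y = C ẋ` holds, then
`y(t) - C Π S ω(t) → 0` as `t → ∞`: the steady-state response of the output is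
`C Π S ω(t)`. -/
theorem stmt_10 (n ν : ℕ) (A : Matrix (Fin n) (Fin n) ℂ) (B : Matrix (Fin n) (Fin 1) ℂ)
    (C : Matrix (Fin 1) (Fin n) ℂ) (S : Matrix (Fin ν) (Fin ν) ℂ)
    (L : Matrix (Fin 1) (Fin ν) ℂ)
    (hA : ∀ μ ∈ spectrum ℂ A, μ.re < 0)
    (hSspec : ∀ μ ∈ spectrum ℂ S, μ.re = 0)
    (Φ : Matrix (Fin n) (Fin ν) ℂ) (hΦ : A * Φ * S + B * L = Φ)
    (x : ℝ → Fin n → ℂ) (ω : ℝ → Fin ν → ℂ)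
    (hx : Differentiable ℝ x) (hω : Differentiable ℝ ω)
    (hωeq : ∀ t ≥ (0 : ℝ), deriv ω t = S.mulVec (ω t))
    (hxeq : ∀ t ≥ (0 : ℝ), A.mulVec (deriv x t) = x t - (B * L).mulVec (ω t)) :
    Filter.Tendsto (fun t => C.mulVec (deriv x t) - (C * Φ * S).mulVec (ω t))
      Filter.atTop (nhds 0) := by
  classical
  -- `A` is invertible
  have hAunit : IsUnit A := by
    by_contra h
    have h0 : (0 : ℂ) ∈ spectrum ℂ A := (spectrum.zero_mem_iff (R := ℂ)).mpr h
    simpa using hA 0 h0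
  have hdet : IsUnit A.det := (Matrix.isUnit_iff_isUnit_det A).mp hAunit
  set M := A⁻¹ with hMdef
  have hMA : M * A = 1 := Matrix.nonsing_inv_mul A hdet
  -- all eigenvalues of `M = A⁻¹` have negative real part
  have hMspec : ∀ μ ∈ spectrum ℂ M, μ.re < 0 := by
    intro μ hμ
    set u := hAunit.unit with hu_def
    have hu : (u : Matrix (Fin n) (Fin n) ℂ) = A := hAunit.unit_spec
    have hui : ((u⁻¹ : (Matrix (Fin n) (Fin n) ℂ)ˣ) : Matrix (Fin n) (Fin n) ℂ) = M := by
      rw [Matrix.coe_units_inv, hu]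
    have hμ0 : μ ≠ 0 := by
      rintro rfl
      have hnu : ¬IsUnit M := (spectrum.zero_mem_iff (R := ℂ)).mp hμ
      exact hnu (hui ▸ (u⁻¹).isUnit)
    have h1 : μ⁻¹ ∈ spectrum ℂ A := by
      have h' := (spectrum.inv₀_mem_inv_iff (R := ℂ) (r := μ⁻¹) (a := u))
      rw [inv_inv, hui, hu] at h'
      exact h'.mp hμ
    have h2 := hA _ h1
    rw [Complex.inv_re] at h2
    have h4 : 0 < Complex.normSq μ := Complex.normSq_pos.mpr hμ0
    have := div_neg_iff.mp h2
    rcases this with ⟨_, h5⟩ | ⟨h5, _⟩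
    · linarith
    · exact h5
  -- the error signal
  set z : ℝ → Fin n → ℂ := fun t => x t - Φ.mulVec (ω t) with hzdef
  have hzderiv : ∀ t : ℝ, HasDerivAt z (deriv x t - Φ.mulVec (deriv ω t)) t := fun t =>
    ((hx t).hasDerivAt).sub (hasDerivAt_constMulVec Φ (hω t).hasDerivAt)
  have hzODE : ∀ t ≥ (0 : ℝ), HasDerivAt z (M.mulVec (z t)) t := by
    intro t ht
    have hd := hzderiv t
    have hAz : A.mulVec (deriv x t - Φ.mulVec (deriv ω t)) = z t := by
      rw [Matrix.mulVec_sub, hxeq t ht, hωeq t ht, Matrix.mulVec_mulVec,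
        Matrix.mulVec_mulVec]
      have hsum : (A * Φ * S).mulVec (ω t) + (B * L).mulVec (ω t) = Φ.mulVec (ω t) := by
        rw [← Matrix.add_mulVec, hΦ]
      rw [hzdef]
      simp only
      rw [← hsum]
      abel
    have heq : deriv x t - Φ.mulVec (deriv ω t) = M.mulVec (z t) := by
      have h6 := congrArg (fun u => M.mulVec u) hAz
      simp only [Matrix.mulVec_mulVec, hMA, Matrix.one_mulVec] at h6
      exact h6
    rw [heq] at hd
    exact hd
  -- the comparison solution
  set ζ : ℝ → Fin n → ℂ := fun t => (exp (t • M)).mulVec (z 0) with hζdef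
  have hζderiv : ∀ t : ℝ, HasDerivAt ζ (M.mulVec (ζ t)) t := by
    intro t
    have h := hasDerivAt_exp_smul_const' (𝕂 := ℝ) M t
    have h2 := (mulVecCLM (z 0)).hasFDerivAt.comp_hasDerivAt t h
    have h3 : (M * exp (t • M)) *ᵥ z 0 = M *ᵥ ζ t := by
      rw [hζdef]; exact (Matrix.mulVec_mulVec _ _ _).symm
    rw [← h3]; exact h2
  have hζ0 : z 0 = ζ 0 := by
    rw [hζdef]
    simp only [zero_smul, exp_zero, Matrix.one_mulVec]
  -- uniqueness of solutions
  have huniq : ∀ b ≥ (0 : ℝ), z b = ζ b := by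
    intro b hb
    have hLip : ∀ _t : ℝ, LipschitzWith ‖constMulVecCLM M‖₊ (fun y : Fin n → ℂ => M.mulVec y) := by
      intro _t
      exact (constMulVecCLM M).lipschitz
    have hzc : ContinuousOn z (Set.Icc 0 b) :=
      (Differentiable.continuous fun t => (hzderiv t).differentiableAt).continuousOn
    have hζc : ContinuousOn ζ (Set.Icc 0 b) :=
      (Differentiable.continuous fun t => (hζderiv t).differentiableAt).continuousOn
    have := ODE_solution_unique (v := fun _ y => M.mulVec y) hLip hzc
      (fun t ht => (hzODE t ht.1).hasDerivWithinAt) hζc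
      (fun t ht => (hζderiv t).hasDerivWithinAt) hζ0
    exact this ⟨hb, le_refl b⟩
  -- final computation
  have hfinal : ∀ t ≥ (0 : ℝ),
      C.mulVec (deriv x t) - (C * Φ * S).mulVec (ω t) = C.mulVec (M.mulVec (ζ t)) := by
    intro t ht
    have hdz : deriv z t = M.mulVec (z t) := (hzODE t ht).deriv
    have hdz' : deriv z t = deriv x t - Φ.mulVec (deriv ω t) := (hzderiv t).deriv
    have hdx : deriv x t = M.mulVec (z t) + Φ.mulVec (S.mulVec (ω t)) := by
      rw [← hωeq t ht, ← hdz, hdz']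
      abel
    have hCΦS : (C * Φ * S) *ᵥ ω t = C *ᵥ (Φ *ᵥ (S *ᵥ ω t)) := by
      rw [Matrix.mulVec_mulVec, Matrix.mulVec_mulVec]
    rw [hdx, Matrix.mulVec_add, hCΦS, huniq t ht]
    abel
  have hkey : Tendsto ζ atTop (𝓝 0) := Stmt10Aux.key M hMspec (z 0)
  have h2 : Tendsto (fun t => C.mulVec (M.mulVec (ζ t))) atTop (𝓝 0) := by
    have hc := ((constMulVecCLM C).comp (constMulVecCLM M)).continuous
    have h3 : Tendsto (fun t => ((constMulVecCLM C).comp (constMulVecCLM M)) (ζ t)) atTop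
        (𝓝 (((constMulVecCLM C).comp (constMulVecCLM M)) 0)) := (hc.tendsto 0).comp hkey
    rw [map_zero] at h3
    exact h3.congr fun t => by simp
  refine h2.congr' ?_
  filter_upwards [eventually_ge_atTop (0 : ℝ)] with t ht
  exact (hfinal t ht).symm
end

section
/- Let J, R, Q ∈ ℝ^{n×n} with Jᵀ = −J, Rᵀ = R, Qᵀ = Q, let B ∈ ℝ^{n×1}, S ∈ ℝ^{ν×ν}, L ∈ ℝ^{1×ν}, and let Π ∈ ℝ^{n×ν} satisfy the Sylvester equation (J − R) Q Π + B L = Π S. Then, writing M := Πᵀ Q Π S − Πᵀ Q B L, the following two identities hold: Πᵀ Q R Q Π = −½ (M + Mᵀ) and Πᵀ Q J Q Π = ½ (M − Mᵀ). -/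
open Matrix

/-- Key computation in the proof of Theorem 4.4 (equations (R_G), (J_G)): if `J` is
skew-symmetric, `R, Q` symmetric and `(J-R)QΠ + BL = ΠS`, then with
`M = ΠᵀQΠS - ΠᵀQBL` one has `ΠᵀQRQΠ = -½(M + Mᵀ)` and `ΠᵀQJQΠ = ½(M - Mᵀ)`. -/
theorem stmt_11 (n ν : ℕ) (J R Q : Matrix (Fin n) (Fin n) ℝ)
    (hJ : Jᵀ = -J) (hR : Rᵀ = R) (hQ : Qᵀ = Q)
    (B : Matrix (Fin n) (Fin 1) ℝ) (S : Matrix (Fin ν) (Fin ν) ℝ)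
    (L : Matrix (Fin 1) (Fin ν) ℝ)
    (Φ : Matrix (Fin n) (Fin ν) ℝ) (hΦ : (J - R) * Q * Φ + B * L = Φ * S)
    (M : Matrix (Fin ν) (Fin ν) ℝ) (hM : M = Φᵀ * Q * Φ * S - Φᵀ * Q * B * L) :
    Φᵀ * Q * R * Q * Φ = (-(1 / 2) : ℝ) • (M + Mᵀ) ∧
      Φᵀ * Q * J * Q * Φ = ((1 / 2) : ℝ) • (M - Mᵀ) := by
  have key : M = Φᵀ * Q * J * Q * Φ - Φᵀ * Q * R * Q * Φ := by
    rw [hM, show Φᵀ * Q * Φ * S = Φᵀ * Q * (Φ * S) from (Matrix.mul_assoc _ _ _), ← hΦ]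
    simp only [Matrix.mul_add, Matrix.mul_sub, Matrix.sub_mul, Matrix.mul_assoc]
    abel
  have hMT : Mᵀ = -(Φᵀ * Q * J * Q * Φ) - Φᵀ * Q * R * Q * Φ := by
    rw [key]
    simp only [transpose_sub, transpose_mul, transpose_transpose, hJ, hR, hQ,
      Matrix.mul_neg, Matrix.neg_mul, Matrix.mul_assoc]
  constructor
  · rw [hMT, key]
    ext i j
    simp [Matrix.add_apply, Matrix.sub_apply, Matrix.neg_apply, Matrix.smul_apply]
    ring
  · rw [hMT, key]
    ext i j
    simp [Matrix.add_apply, Matrix.sub_apply, Matrix.neg_apply, Matrix.smul_apply]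
    ring
end

section
/- Let J, R, Q ∈ ℝ^{n×n} with Jᵀ = −J, Rᵀ = R, Qᵀ = Q, let B ∈ ℝ^{n×1}, S ∈ ℝ^{ν×ν}, L ∈ ℝ^{1×ν}, and let Π ∈ ℝ^{n×ν} satisfy (J − R) Q Π + B L = Π S. Assume T := Πᵀ Q Π is invertible and set G := T^{−1} Πᵀ Q B, J̃ := Πᵀ Q J Q Π, R̃ := Πᵀ Q R Q Π, Q̃ := T^{−1}, B̃ := Πᵀ Q B. Then J̃ᵀ = −J̃, R̃ᵀ = R̃, Q̃ᵀ = Q̃, and: (J̃ − R̃) Q̃ T = T (S − G L), B̃ = T G, and B̃ᵀ Q̃ T = Bᵀ Q Π. Hence the reduced order model Σ_G = (S − GL, G, BᵀQΠ) is, under the change of coordinates T, equal to the port-Hamiltonian model ξ̇ = (J̃ − R̃)Q̃ ξ + B̃ u, ψ = B̃ᵀ Q̃ ξ. -/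
open Matrix

/-- Necessity computation of Theorem 4.4(1): if `(J-R)QΠ + BL = ΠS`, `T = ΠᵀQΠ` is
invertible, `G = T⁻¹ΠᵀQB`, and `J̃ = ΠᵀQJQΠ`, `R̃ = ΠᵀQRQΠ`, `Q̃ = T⁻¹`, `B̃ = ΠᵀQB`,
then `J̃` is skew-symmetric, `R̃, Q̃` are symmetric, and `(J̃-R̃)Q̃T = T(S - GL)`,
`B̃ = TG`, `B̃ᵀQ̃T = BᵀQΠ`: under the change of coordinates `T`, the reduced model
`Σ_G = (S - GL, G, BᵀQΠ)` is the port-Hamiltonian model `(J̃, R̃, Q̃, B̃)`. -/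
theorem stmt_12 (n ν : ℕ) (J R Q : Matrix (Fin n) (Fin n) ℝ)
    (hJ : Jᵀ = -J) (hR : Rᵀ = R) (hQ : Qᵀ = Q)
    (B : Matrix (Fin n) (Fin 1) ℝ) (S : Matrix (Fin ν) (Fin ν) ℝ)
    (L : Matrix (Fin 1) (Fin ν) ℝ)
    (Φ : Matrix (Fin n) (Fin ν) ℝ) (hΦ : (J - R) * Q * Φ + B * L = Φ * S)
    (T : Matrix (Fin ν) (Fin ν) ℝ) (hT : T = Φᵀ * Q * Φ) (hTu : IsUnit T)
    (G : Matrix (Fin ν) (Fin 1) ℝ) (hG : G = T⁻¹ * (Φᵀ * Q * B))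
    (Jt Rt Qt : Matrix (Fin ν) (Fin ν) ℝ) (Bt : Matrix (Fin ν) (Fin 1) ℝ)
    (hJt : Jt = Φᵀ * Q * J * Q * Φ) (hRt : Rt = Φᵀ * Q * R * Q * Φ)
    (hQt : Qt = T⁻¹) (hBt : Bt = Φᵀ * Q * B) :
    Jtᵀ = -Jt ∧ Rtᵀ = Rt ∧ Qtᵀ = Qt ∧
      (Jt - Rt) * Qt * T = T * (S - G * L) ∧ Bt = T * G ∧ Btᵀ * Qt * T = Bᵀ * Q * Φ := by
  have hTd : IsUnit T.det := (Matrix.isUnit_iff_isUnit_det T).mp hTu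
  have hTinv : T⁻¹ * T = 1 := Matrix.nonsing_inv_mul T hTd
  have hTinv' : T * T⁻¹ = 1 := Matrix.mul_nonsing_inv T hTd
  have hTsym : Tᵀ = T := by
    simp [hT, Matrix.transpose_mul, hQ, Matrix.mul_assoc]
  have hKey : Φᵀ * Q * ((J - R) * Q * Φ) = T * S - (Φᵀ * Q * B) * L := by
    rw [hT, eq_sub_iff_add_eq]
    simp only [Matrix.mul_assoc] at hΦ ⊢
    rw [← Matrix.mul_add, ← Matrix.mul_add, hΦ]
  refine ⟨?_, ?_, ?_, ?_, ?_, ?_⟩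
  · simp [hJt, Matrix.transpose_mul, hJ, hQ, Matrix.mul_assoc]
  · simp [hRt, Matrix.transpose_mul, hR, hQ, Matrix.mul_assoc]
  · rw [hQt, Matrix.transpose_nonsing_inv, hTsym]
  · have h2 : (Jt - Rt) = Φᵀ * Q * ((J - R) * Q * Φ) := by
      rw [hJt, hRt]
      simp only [Matrix.mul_sub, Matrix.sub_mul, Matrix.mul_assoc]
    rw [h2, hKey, hQt, hG, Matrix.mul_assoc _ T⁻¹ T, hTinv, Matrix.mul_one, Matrix.mul_sub]
    simp only [← Matrix.mul_assoc, hTinv', Matrix.one_mul]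
  · rw [hBt, hG, ← Matrix.mul_assoc, hTinv', Matrix.one_mul]
  · rw [hBt, hQt, Matrix.mul_assoc _ T⁻¹ T, hTinv, Matrix.mul_one]
    simp [Matrix.transpose_mul, hQ, Matrix.mul_assoc]
end

section
/- Let J, R, Q ∈ ℝ^{n×n} with Jᵀ = −J, Rᵀ = R, Qᵀ = Q and Q invertible, let B ∈ ℝ^{n×1}, 𝒬 ∈ ℝ^{ν×ν}, ℛ ∈ ℝ^{ν×1}, and let Υ ∈ ℝ^{ν×n} satisfy the dual Sylvester equation 𝒬 Υ = Υ (J − R) Q + ℛ Bᵀ Q. Assume M := Υ Q^{−1} Υᵀ is invertible and set H := Bᵀ Υᵀ M^{−1}, J̃ := Υ J Υᵀ, R̃ := Υ R Υᵀ, Q̃ := M^{−1}, B̃ := Υ B. Then J̃ᵀ = −J̃, R̃ᵀ = R̃, Q̃ᵀ = Q̃, and: (J̃ − R̃) Q̃ = 𝒬 − ℛ H and B̃ᵀ Q̃ = H. Hence the reduced order model Σ_H = (𝒬 − ℛH, ΥB, H) is exactly the port-Hamiltonian model ξ̇ = (J̃ − R̃)Q̃ ξ + B̃ u, ψ = B̃ᵀ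 Q̃ ξ. -/
open Matrix

/-- Theorem 4.4(2): if `Q` is invertible, `𝒬Υ = Υ(J-R)Q + ℛBᵀQ`, `M = ΥQ⁻¹Υᵀ` is
invertible, `H = BᵀΥᵀM⁻¹`, and `J̃ = ΥJΥᵀ`, `R̃ = ΥRΥᵀ`, `Q̃ = M⁻¹`, `B̃ = ΥB`, then
`J̃` is skew-symmetric, `R̃, Q̃` symmetric, `(J̃-R̃)Q̃ = 𝒬 - ℛH` and `B̃ᵀQ̃ = H`:
the reduced model `Σ_H = (𝒬 - ℛH, ΥB, H)` is exactly the port-Hamiltonian model. -/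
theorem stmt_13 (n ν : ℕ) (J R Q : Matrix (Fin n) (Fin n) ℝ)
    (hJ : Jᵀ = -J) (hR : Rᵀ = R) (hQ : Qᵀ = Q) (hQu : IsUnit Q)
    (B : Matrix (Fin n) (Fin 1) ℝ) (Qc : Matrix (Fin ν) (Fin ν) ℝ)
    (Rc : Matrix (Fin ν) (Fin 1) ℝ)
    (Υ : Matrix (Fin ν) (Fin n) ℝ)
    (hΥ : Qc * Υ = Υ * ((J - R) * Q) + Rc * (Bᵀ * Q))
    (M : Matrix (Fin ν) (Fin ν) ℝ) (hM : M = Υ * Q⁻¹ * Υᵀ) (hMu : IsUnit M)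
    (H : Matrix (Fin 1) (Fin ν) ℝ) (hH : H = Bᵀ * Υᵀ * M⁻¹)
    (Jt Rt Qt : Matrix (Fin ν) (Fin ν) ℝ) (Bt : Matrix (Fin ν) (Fin 1) ℝ)
    (hJt : Jt = Υ * J * Υᵀ) (hRt : Rt = Υ * R * Υᵀ)
    (hQt : Qt = M⁻¹) (hBt : Bt = Υ * B) :
    Jtᵀ = -Jt ∧ Rtᵀ = Rt ∧ Qtᵀ = Qt ∧
      (Jt - Rt) * Qt = Qc - Rc * H ∧ Btᵀ * Qt = H := by
  have hQd : IsUnit Q.det := (Matrix.isUnit_iff_isUnit_det Q).mp hQu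
  have hMd : IsUnit M.det := (Matrix.isUnit_iff_isUnit_det M).mp hMu
  have hQQ : Q * Q⁻¹ = 1 := Matrix.mul_nonsing_inv Q hQd
  have hMM : M * M⁻¹ = 1 := Matrix.mul_nonsing_inv M hMd
  have hQit : (Q⁻¹)ᵀ = Q⁻¹ := by rw [Matrix.transpose_nonsing_inv, hQ]
  have hMsym : Mᵀ = M := by
    rw [hM]; simp [Matrix.transpose_mul, hQit, Matrix.mul_assoc]
  have hQtsym : Qtᵀ = Qt := by
    rw [hQt, Matrix.transpose_nonsing_inv, hMsym]
  -- Sylvester consequence: Qc * M = Υ*(J-R)*Υᵀ + Rc*(Bᵀ*Υᵀ)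
  have key : Qc * M = Υ * (J - R) * Υᵀ + Rc * (Bᵀ * Υᵀ) := by
    have := congrArg (fun X => X * (Q⁻¹ * Υᵀ)) hΥ
    simp only [Matrix.add_mul] at this
    calc Qc * M = Qc * Υ * (Q⁻¹ * Υᵀ) := by rw [hM, Matrix.mul_assoc, Matrix.mul_assoc]
      _ = Υ * ((J - R) * Q) * (Q⁻¹ * Υᵀ) + Rc * (Bᵀ * Q) * (Q⁻¹ * Υᵀ) := this
      _ = Υ * (J - R) * Υᵀ + Rc * (Bᵀ * Υᵀ) := by
          rw [show Υ * ((J - R) * Q) * (Q⁻¹ * Υᵀ) = Υ * (J - R) * (Q * Q⁻¹) * Υᵀ by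
                simp only [Matrix.mul_assoc],
              show Rc * (Bᵀ * Q) * (Q⁻¹ * Υᵀ) = Rc * (Bᵀ * (Q * Q⁻¹ * Υᵀ)) by
                simp only [Matrix.mul_assoc],
              hQQ]
          simp [Matrix.mul_assoc]
  refine ⟨?_, ?_, hQtsym, ?_, ?_⟩
  · rw [hJt]
    simp only [Matrix.transpose_mul, Matrix.transpose_transpose, hJ]
    simp [Matrix.mul_assoc]
  · rw [hRt]
    simp only [Matrix.transpose_mul, Matrix.transpose_transpose, hR]
    simp [Matrix.mul_assoc]
  · have : Υ * (J - R) * Υᵀ = Qc * M - Rc * (Bᵀ * Υᵀ) := by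
      rw [key]; exact (add_sub_cancel_right _ _).symm
    rw [hJt, hRt, hQt, show Υ * J * Υᵀ - Υ * R * Υᵀ = Υ * (J - R) * Υᵀ by
          simp [Matrix.sub_mul, Matrix.mul_sub], this, hH]
    rw [Matrix.sub_mul, Matrix.mul_assoc, hMM]
    simp [Matrix.mul_assoc]
  · rw [hBt, hQt, hH]
    simp [Matrix.mul_assoc]
end

section
/- Let J, R, Q ∈ ℂ^{n×n} with J* = −J, R* = R, Q* = Q, let B ∈ ℂ^{n×m}, and set A := (J − R)Q. Let s₁, …, s_ν ∈ ℂ with each s_i I − A invertible, let l₁, …, l_ν ∈ ℂ^m, and let Π ∈ ℂ^{n×ν} have i-th column (s_i I − A)^{−1} B l_i. Assume T := Π* Q Π is invertible, define J̃ := Π* Q J Q Π, R̃ := Π* Q R Q Π, Q̃ := T^{−1}, B̃ := Π* Q B, and assume each s_i I − (J̃ − R̃)Q̃ is invertible. Then for every i = 1, …, ν: B* Q (s_i I − A)^{−1} B l_i = B̃* Q̃ (s_i I − (J̃ − R̃)Q̃)^{−1} B̃ l_i. That is, the reduced port-Hamiltonian model satisfies the right tangential interpolation conditions K(s_i) l_i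 = K̂(s_i) l_i. -/
open Matrix

/-- Proposition 4.3(1) + Corollary 4.5(1): the reduced port-Hamiltonian model built
from `Π` (with columns `(s_i I - A)⁻¹ B l_i`, `A = (J-R)Q`) via
`J̃ = Π*QJQΠ`, `R̃ = Π*QRQΠ`, `Q̃ = (Π*QΠ)⁻¹`, `B̃ = Π*QB` satisfies the right
tangential interpolation conditions `K(s_i) l_i = K̂(s_i) l_i`. -/
theorem stmt_15 (n m ν : ℕ) (J R Q : Matrix (Fin n) (Fin n) ℂ)
    (hJ : Jᴴ = -J) (hR : Rᴴ = R) (hQ : Qᴴ = Q)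
    (B : Matrix (Fin n) (Fin m) ℂ)
    (A : Matrix (Fin n) (Fin n) ℂ) (hA : A = (J - R) * Q)
    (s : Fin ν → ℂ)
    (hs : ∀ i, IsUnit (s i • (1 : Matrix (Fin n) (Fin n) ℂ) - A))
    (l : Fin ν → Fin m → ℂ)
    (Φ : Matrix (Fin n) (Fin ν) ℂ)
    (hΦ : ∀ (i : Fin ν) (r : Fin n),
      Φ r i = ((s i • (1 : Matrix (Fin n) (Fin n) ℂ) - A)⁻¹.mulVec (B.mulVec (l i))) r)
    (T : Matrix (Fin ν) (Fin ν) ℂ) (hT : T = Φᴴ * Q * Φ) (hTu : IsUnit T)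
    (Jt Rt Qt : Matrix (Fin ν) (Fin ν) ℂ) (Bt : Matrix (Fin ν) (Fin m) ℂ)
    (hJt : Jt = Φᴴ * Q * J * Q * Φ) (hRt : Rt = Φᴴ * Q * R * Q * Φ)
    (hQt : Qt = T⁻¹) (hBt : Bt = Φᴴ * Q * B)
    (hred : ∀ i, IsUnit (s i • (1 : Matrix (Fin ν) (Fin ν) ℂ) - (Jt - Rt) * Qt)) :
    ∀ i : Fin ν,
      (Bᴴ * Q * (s i • (1 : Matrix (Fin n) (Fin n) ℂ) - A)⁻¹ * B).mulVec (l i)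
        = (Btᴴ * Qt * (s i • (1 : Matrix (Fin ν) (Fin ν) ℂ) - (Jt - Rt) * Qt)⁻¹
            * Bt).mulVec (l i) := by
  intro i
  classical
  set e : Fin ν → ℂ := Pi.single i 1 with he
  have hdet : IsUnit (s i • (1 : Matrix (Fin n) (Fin n) ℂ) - A).det :=
    (Matrix.isUnit_iff_isUnit_det _).mp (hs i)
  have hTdet : IsUnit T.det := (Matrix.isUnit_iff_isUnit_det _).mp hTu
  set M : Matrix (Fin ν) (Fin ν) ℂ :=
    s i • (1 : Matrix (Fin ν) (Fin ν) ℂ) - (Jt - Rt) * Qt with hM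
  have hMdet : IsUnit M.det := (Matrix.isUnit_iff_isUnit_det _).mp (hred i)
  -- column of Φ
  have hΦe : Φ.mulVec e =
      (s i • (1 : Matrix (Fin n) (Fin n) ℂ) - A)⁻¹.mulVec (B.mulVec (l i)) := by
    funext r
    rw [← hΦ i r]
    simp [Matrix.mulVec, dotProduct, he, Pi.single_apply, mul_ite]
  have hx : (s i • (1 : Matrix (Fin n) (Fin n) ℂ) - A).mulVec (Φ.mulVec e)
      = B.mulVec (l i) := by
    rw [hΦe, Matrix.mulVec_mulVec, Matrix.mul_nonsing_inv _ hdet, Matrix.one_mulVec]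
  have hQtT : Qt * T = 1 := by rw [hQt, Matrix.nonsing_inv_mul _ hTdet]
  have h1 : M * T = Φᴴ * Q * ((s i • (1 : Matrix (Fin n) (Fin n) ℂ) - A) * Φ) := by
    rw [hM, Matrix.sub_mul, mul_assoc (Jt - Rt), hQtT, mul_one, Matrix.smul_mul,
      Matrix.one_mul, hJt, hRt, hT, hA]
    simp only [Matrix.sub_mul, Matrix.mul_sub, Matrix.smul_mul, Matrix.mul_smul,
      Matrix.one_mul]
    simp only [Matrix.mul_assoc]
  -- key identity for the reduced system
  have hkey : M.mulVec (T.mulVec e) = Bt.mulVec (l i) := by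
    rw [Matrix.mulVec_mulVec, h1]
    simp only [← Matrix.mulVec_mulVec]
    rw [hx, hBt]
    simp only [← Matrix.mulVec_mulVec]
  have hy : M⁻¹.mulVec (Bt.mulVec (l i)) = T.mulVec e := by
    rw [← hkey, Matrix.mulVec_mulVec, Matrix.nonsing_inv_mul _ hMdet, Matrix.one_mulVec]
  have hBth : Btᴴ = Bᴴ * (Q * Φ) := by
    rw [hBt]
    simp [Matrix.conjTranspose_mul, hQ, mul_assoc]
  have hQte : Qt.mulVec (T.mulVec e) = e := by
    rw [Matrix.mulVec_mulVec, hQtT, Matrix.one_mulVec]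
  simp only [← Matrix.mulVec_mulVec]
  rw [← hΦe, hy, hQte, hBth]
  simp only [← Matrix.mulVec_mulVec]
end

section
/- Let J, R, Q ∈ ℂ^{n×n} with J* = −J, R* = R, Q* = Q and Q invertible, let B ∈ ℂ^{n×m}, and set A := (J − R)Q. Let s₁, …, s_ν ∈ ℂ with each s_i I − A invertible, let r₁, …, r_ν ∈ ℂ^{1×m}, let 𝒬 = diag(s₁, …, s_ν), let ℛ ∈ ℂ^{ν×m} have rows r₁, …, r_ν, and let Υ ∈ ℂ^{ν×n} have i-th row r_i B* Q (s_i I − A)^{−1}. Assume M := Υ Q^{−1} Υ* is invertible, define H := B* Υ* M^{−1}, and assume each s_i I − 𝒬 + ℛH is invertible. Then for every i = 1, …, ν: r_i B* Q (s_i I − A)^{−1} B = r_i H (s_i I − 𝒬 + ℛH)^{−1} Υ B. That is, the reduced port-Hamiltonian model Σ_Υ = (𝒬 − ℛH, ΥB, H) satisfies the left tangential interpolation conditions r_i K(s_i) = r_i K̂(s_i). -/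
open Matrix

/-- Proposition 4.3(2) + Corollary 4.5(2): the reduced port-Hamiltonian model
`Σ_Υ = (𝒬 - ℛH, ΥB, H)` built from `Υ` (with rows `r_i B*Q(s_i I - A)⁻¹`,
`A = (J-R)Q`, `𝒬 = diag(s₁,…,s_ν)`, `H = B*Υ*(ΥQ⁻¹Υ*)⁻¹`) satisfies the left
tangential interpolation conditions `r_i K(s_i) = r_i K̂(s_i)`. -/
theorem stmt_16 (n m ν : ℕ) (J R Q : Matrix (Fin n) (Fin n) ℂ)
    (hJ : Jᴴ = -J) (hR : Rᴴ = R) (hQ : Qᴴ = Q) (hQu : IsUnit Q)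
    (B : Matrix (Fin n) (Fin m) ℂ)
    (A : Matrix (Fin n) (Fin n) ℂ) (hA : A = (J - R) * Q)
    (s : Fin ν → ℂ)
    (hs : ∀ i, IsUnit (s i • (1 : Matrix (Fin n) (Fin n) ℂ) - A))
    (r : Fin ν → Fin m → ℂ)
    (Qc : Matrix (Fin ν) (Fin ν) ℂ) (hQc : Qc = Matrix.diagonal s)
    (Rc : Matrix (Fin ν) (Fin m) ℂ) (hRc : ∀ i k, Rc i k = r i k)
    (Υ : Matrix (Fin ν) (Fin n) ℂ)
    (hΥ : ∀ (i : Fin ν) (j : Fin n),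
      Υ i j = Matrix.vecMul (r i)
        (Bᴴ * Q * (s i • (1 : Matrix (Fin n) (Fin n) ℂ) - A)⁻¹) j)
    (M : Matrix (Fin ν) (Fin ν) ℂ) (hM : M = Υ * Q⁻¹ * Υᴴ) (hMu : IsUnit M)
    (H : Matrix (Fin m) (Fin ν) ℂ) (hH : H = Bᴴ * Υᴴ * M⁻¹)
    (hred : ∀ i, IsUnit (s i • (1 : Matrix (Fin ν) (Fin ν) ℂ) - Qc + Rc * H)) :
    ∀ i : Fin ν,
      Matrix.vecMul (r i)
          (Bᴴ * Q * (s i • (1 : Matrix (Fin n) (Fin n) ℂ) - A)⁻¹ * B)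
        = Matrix.vecMul (r i)
          (H * (s i • (1 : Matrix (Fin ν) (Fin ν) ℂ) - Qc + Rc * H)⁻¹ * Υ * B) := by
  intro i
  set W : Matrix (Fin ν) (Fin ν) ℂ :=
    s i • (1 : Matrix (Fin ν) (Fin ν) ℂ) - Qc + Rc * H with hW
  -- Row i of W equals r_i H
  have hrow : W i = Matrix.vecMul (r i) H := by
    funext j
    have : W i j = (Rc * H) i j := by
      by_cases h : i = j <;>
        simp [hW, hQc, h, Matrix.add_apply, Matrix.sub_apply, Matrix.smul_apply,
          Matrix.one_apply, Matrix.diagonal_apply]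
    rw [this]
    simp [Matrix.mul_apply, Matrix.vecMul, dotProduct, hRc]
  have hWinv : W * W⁻¹ = 1 :=
    Matrix.mul_nonsing_inv W ((Matrix.isUnit_iff_isUnit_det W).mp (hred i))
  -- LHS equals row i of Υ * B
  have hLHS : Matrix.vecMul (r i)
      (Bᴴ * Q * (s i • (1 : Matrix (Fin n) (Fin n) ℂ) - A)⁻¹ * B)
      = Matrix.vecMul (Υ i) B := by
    have hUi : Υ i = Matrix.vecMul (r i)
        (Bᴴ * Q * (s i • (1 : Matrix (Fin n) (Fin n) ℂ) - A)⁻¹) := funext (hΥ i)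
    rw [hUi, Matrix.vecMul_vecMul]
  rw [hLHS]
  -- RHS
  have hassoc : H * W⁻¹ * Υ * B = H * (W⁻¹ * Υ * B) := by
    simp only [Matrix.mul_assoc]
  rw [hassoc, ← Matrix.vecMul_vecMul, ← hrow]
  have : Matrix.vecMul (W i) (W⁻¹ * Υ * B) = (W * (W⁻¹ * Υ * B)) i := by
    funext j
    simp [Matrix.vecMul, dotProduct, Matrix.mul_apply]
  rw [this]
  have : W * (W⁻¹ * Υ * B) = Υ * B := by
    rw [show W⁻¹ * Υ * B = W⁻¹ * (Υ * B) from Matrix.mul_assoc _ _ _, ← Matrix.mul_assoc,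
      hWinv, Matrix.one_mul]
  rw [this]
  funext j
  simp [Matrix.vecMul, dotProduct, Matrix.mul_apply]
end

section
/- Let J, R, Q ∈ ℝ^{n×n} with Jᵀ = −J, Rᵀ = R, Qᵀ = Q, let B ∈ ℝ^{n×1}, S ∈ ℝ^{ν×ν}, L ∈ ℝ^{1×ν}, and let Π ∈ ℝ^{n×ν} satisfy the Sylvester equation (J − R) Q Π S + B L = Π. Assume T := Πᵀ Q Π is invertible and define J̃ := Πᵀ Q J Q Π, R̃ := Πᵀ Q R Q Π, Q̃ := T^{−1}, B̃ := Πᵀ Q B. Then the port-Hamiltonian reduced order model ((J̃ − R̃)Q̃, B̃, B̃ᵀQ̃) satisfies the moment matching conditions with P = T, namely: (J̃ − R̃) Q̃ T S + B̃ L = T and B̃ᵀ Q̃ T = Bᵀ Q Π. -/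
open Matrix

/-- Proposition 4.6(1): if `(J-R)QΠS + BL = Π` and `T = ΠᵀQΠ` is invertible, then the
port-Hamiltonian reduced model `((J̃-R̃)Q̃, B̃, B̃ᵀQ̃)` with `J̃ = ΠᵀQJQΠ`,
`R̃ = ΠᵀQRQΠ`, `Q̃ = T⁻¹`, `B̃ = ΠᵀQB` satisfies the moment matching conditions with
`P = T`: `(J̃-R̃)Q̃TS + B̃L = T` and `B̃ᵀQ̃T = BᵀQΠ`. -/
theorem stmt_17 (n ν : ℕ) (J R Q : Matrix (Fin n) (Fin n) ℝ)
    (hJ : Jᵀ = -J) (hR : Rᵀ = R) (hQ : Qᵀ = Q)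
    (B : Matrix (Fin n) (Fin 1) ℝ) (S : Matrix (Fin ν) (Fin ν) ℝ)
    (L : Matrix (Fin 1) (Fin ν) ℝ)
    (Φ : Matrix (Fin n) (Fin ν) ℝ) (hΦ : (J - R) * Q * Φ * S + B * L = Φ)
    (T : Matrix (Fin ν) (Fin ν) ℝ) (hT : T = Φᵀ * Q * Φ) (hTu : IsUnit T)
    (Jt Rt Qt : Matrix (Fin ν) (Fin ν) ℝ) (Bt : Matrix (Fin ν) (Fin 1) ℝ)
    (hJt : Jt = Φᵀ * Q * J * Q * Φ) (hRt : Rt = Φᵀ * Q * R * Q * Φ)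
    (hQt : Qt = T⁻¹) (hBt : Bt = Φᵀ * Q * B) :
    (Jt - Rt) * Qt * T * S + Bt * L = T ∧ Btᵀ * Qt * T = Bᵀ * Q * Φ := by
  have hinv : T⁻¹ * T = 1 := nonsing_inv_mul T ((isUnit_iff_isUnit_det T).mp hTu)
  constructor
  · have h1 : (Jt - Rt) * Qt * T = Φᵀ * Q * (J - R) * Q * Φ := by
      rw [hJt, hRt, hQt, mul_assoc _ T⁻¹ T, hinv, mul_one]
      simp only [Matrix.mul_sub, Matrix.sub_mul]
    rw [h1, hBt]
    calc Φᵀ * Q * (J - R) * Q * Φ * S + Φᵀ * Q * B * L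
        = Φᵀ * Q * ((J - R) * Q * Φ * S + B * L) := by
          simp only [Matrix.mul_add, Matrix.mul_assoc]
      _ = T := by rw [hΦ, hT]
  · rw [hBt, hQt, Matrix.mul_assoc, hinv, Matrix.mul_one, transpose_mul, transpose_mul,
      transpose_transpose, hQ, Matrix.mul_assoc]
end

section
/- Let J, R, Q ∈ ℝ^{n×n} with Jᵀ = −J, Rᵀ = R, Qᵀ = Q, let B ∈ ℝ^{n×1}, let S ∈ ℝ^{ν×ν} be invertible, L ∈ ℝ^{1×ν}, and let Π ∈ ℝ^{n×ν} satisfy (J − R) Q Π S + B L = Π. Assume T := Πᵀ Q Π is invertible. If F ∈ ℝ^{ν×ν} satisfies F T S + (Πᵀ Q B) L = T, then necessarily F = Πᵀ Q (J − R) Q Π · T^{−1}; i.e., F equals (J̃ − R̃)Q̃ with J̃ = ΠᵀQJQΠ, R̃ = ΠᵀQRQΠ, Q̃ = T^{−1}, so the reduced model with G = ΠᵀQB and this P = T is port-Hamiltonian. -/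
open Matrix

/-- Sufficiency (full-rank `S`) part of Theorem 4.8(1): if `S` is invertible,
`(J-R)QΠS + BL = Π`, `T = ΠᵀQΠ` is invertible, and `F` satisfies the matching
condition `FTS + (ΠᵀQB)L = T`, then necessarily `F = ΠᵀQ(J-R)QΠ T⁻¹`, i.e. `F` equals
`(J̃-R̃)Q̃` and the reduced model with `G = ΠᵀQB`, `P = T` is port-Hamiltonian. -/
theorem stmt_18 (n ν : ℕ) (J R Q : Matrix (Fin n) (Fin n) ℝ)
    (hJ : Jᵀ = -J) (hR : Rᵀ = R) (hQ : Qᵀ = Q)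
    (B : Matrix (Fin n) (Fin 1) ℝ) (S : Matrix (Fin ν) (Fin ν) ℝ) (hS : IsUnit S)
    (L : Matrix (Fin 1) (Fin ν) ℝ)
    (Φ : Matrix (Fin n) (Fin ν) ℝ) (hΦ : (J - R) * Q * Φ * S + B * L = Φ)
    (T : Matrix (Fin ν) (Fin ν) ℝ) (hT : T = Φᵀ * Q * Φ) (hTu : IsUnit T)
    (F : Matrix (Fin ν) (Fin ν) ℝ) (hF : F * T * S + (Φᵀ * Q * B) * L = T) :
    F = Φᵀ * Q * (J - R) * Q * Φ * T⁻¹ := by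
  have h1 : Φᵀ * Q * (J - R) * Q * Φ * S + (Φᵀ * Q * B) * L = T := by
    rw [hT]
    calc Φᵀ * Q * (J - R) * Q * Φ * S + (Φᵀ * Q * B) * L
        = Φᵀ * Q * ((J - R) * Q * Φ * S + B * L) := by
          simp only [Matrix.mul_add, Matrix.mul_assoc]
      _ = Φᵀ * Q * Φ := by rw [hΦ]
  have h2 : F * T * S = Φᵀ * Q * (J - R) * Q * Φ * S := by
    have := hF.trans h1.symm
    exact add_right_cancel this
  have h3 : F * T = Φᵀ * Q * (J - R) * Q * Φ := hS.mul_right_cancel h2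
  have hdet : IsUnit T.det := (Matrix.isUnit_iff_isUnit_det T).mp hTu
  calc F = F * T * T⁻¹ := by rw [Matrix.mul_nonsing_inv_cancel_right _ _ hdet]
    _ = Φᵀ * Q * (J - R) * Q * Φ * T⁻¹ := by rw [h3]
end

section
/- Let J, R, Q ∈ ℝ^{n×n} with Jᵀ = −J, Rᵀ = R, Qᵀ = Q, let B ∈ ℝ^{n×1}, S ∈ ℝ^{ν×ν}, L ∈ ℝ^{1×ν}, and let Π ∈ ℝ^{n×ν} satisfy (J − R) Q Π + B L = Π S. Let P ∈ ℝ^{ν×ν} be symmetric positive definite and assume the matrix inequality Sᵀ P + P S ≤ Πᵀ Q B L + Lᵀ Bᵀ Q Π (i.e., ΠᵀQBL + LᵀBᵀQΠ − SᵀP − PS is positive semidefinite). Define G := P^{−1} Πᵀ Q B, J̃ := ½[(S − GL) P^{−1} − P^{−1} (S − GL)ᵀ], R̃ := −½[(S − GL) P^{−1} + P^{−1} (S − GL)ᵀ], Q̃ := P. Then: J̃ᵀ = −J̃; R̃ᵀ = R̃ and R̃ is positive semidefinite; (J̃ − R̃) Q̃ = S − GL; and Gᵀ Q̃ = Bᵀ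 Q Π. Hence the reduced model Σ_G = (S − GL, G, BᵀQΠ) is a port-Hamiltonian model ξ̇ = (J̃ − R̃)Q̃ ξ + G u, ψ = GᵀQ̃ ξ. -/
open Matrix

private lemma psd_smul_aux {ν : ℕ} {M : Matrix (Fin ν) (Fin ν) ℝ}
    (h : M.PosSemidef) {c : ℝ} (hc : 0 ≤ c) : (c • M).PosSemidef := by
  constructor
  · unfold Matrix.IsHermitian
    rw [Matrix.conjTranspose_smul, h.1.eq, star_trivial]
  · intro x
    exact (h.smul hc).2 x

/-- Lemma A.3(1): if `(J-R)QΠ + BL = ΠS`, `P` is symmetric positive definite and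
`SᵀP + PS ≤ ΠᵀQBL + LᵀBᵀQΠ`, then with `G = P⁻¹ΠᵀQB`,
`J̃ = ½[(S-GL)P⁻¹ - P⁻¹(S-GL)ᵀ]`, `R̃ = -½[(S-GL)P⁻¹ + P⁻¹(S-GL)ᵀ]`, `Q̃ = P`, one has
`J̃` skew-symmetric, `R̃` symmetric positive semidefinite, `(J̃-R̃)Q̃ = S - GL`, and
`GᵀQ̃ = BᵀQΠ`: the passive reduced model `Σ_G` is port-Hamiltonian. -/
theorem stmt_19 (n ν : ℕ) (J R Q : Matrix (Fin n) (Fin n) ℝ)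
    (hJ : Jᵀ = -J) (hR : Rᵀ = R) (hQ : Qᵀ = Q)
    (B : Matrix (Fin n) (Fin 1) ℝ) (S : Matrix (Fin ν) (Fin ν) ℝ)
    (L : Matrix (Fin 1) (Fin ν) ℝ)
    (Φ : Matrix (Fin n) (Fin ν) ℝ) (hΦ : (J - R) * Q * Φ + B * L = Φ * S)
    (P : Matrix (Fin ν) (Fin ν) ℝ) (hP : P.PosDef) (hPsym : Pᵀ = P)
    (hineq : (Φᵀ * Q * B * L + Lᵀ * Bᵀ * Q * Φ - Sᵀ * P - P * S).PosSemidef)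
    (G : Matrix (Fin ν) (Fin 1) ℝ) (hG : G = P⁻¹ * (Φᵀ * Q * B))
    (Jt Rt Qt : Matrix (Fin ν) (Fin ν) ℝ)
    (hJt : Jt = ((1 / 2) : ℝ) • ((S - G * L) * P⁻¹ - P⁻¹ * (S - G * L)ᵀ))
    (hRt : Rt = (-(1 / 2) : ℝ) • ((S - G * L) * P⁻¹ + P⁻¹ * (S - G * L)ᵀ))
    (hQt : Qt = P) :
    Jtᵀ = -Jt ∧ Rtᵀ = Rt ∧ Rt.PosSemidef ∧
      (Jt - Rt) * Qt = S - G * L ∧ Gᵀ * Qt = Bᵀ * Q * Φ := by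
  have hdet : IsUnit P.det := isUnit_iff_ne_zero.mpr hP.det_pos.ne'
  have hPiP : P⁻¹ * P = 1 := Matrix.nonsing_inv_mul P hdet
  have hPPi : P * P⁻¹ = 1 := Matrix.mul_nonsing_inv P hdet
  have hPit : (P⁻¹)ᵀ = P⁻¹ := by
    rw [Matrix.transpose_nonsing_inv, hPsym]
  set A := S - G * L with hA
  have hGt : Gᵀ = Bᵀ * Q * Φ * P⁻¹ := by
    rw [hG]; simp [Matrix.transpose_mul, hPit, hQ, Matrix.mul_assoc]
  have hGP : Gᵀ * P = Bᵀ * Q * Φ := by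
    rw [hGt, Matrix.mul_assoc, hPiP, Matrix.mul_one]
  have hJts : Jtᵀ = -Jt := by
    rw [hJt]
    simp only [Matrix.transpose_smul, Matrix.transpose_sub, Matrix.transpose_mul,
      hPit, Matrix.transpose_transpose, smul_sub, neg_sub, smul_sub]
  have hRts : Rtᵀ = Rt := by
    rw [hRt]
    simp only [Matrix.transpose_smul, Matrix.transpose_add, Matrix.transpose_mul,
      hPit, Matrix.transpose_transpose]
    rw [add_comm]
  -- key identity: Rt = (1/2) • (P⁻¹ * M * P⁻¹) with M the matrix in hineq
  have hkey : Rt = ((1/2 : ℝ)) •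
      (P⁻¹ * (Φᵀ * Q * B * L + Lᵀ * Bᵀ * Q * Φ - Sᵀ * P - P * S) * P⁻¹) := by
    rw [hRt, hA]
    have hGL : P⁻¹ * (Φᵀ * Q * B * L) = G * L := by
      rw [hG]; simp [Matrix.mul_assoc]
    have hLG : Lᵀ * Bᵀ * Q * Φ * P⁻¹ = Lᵀ * Gᵀ := by
      rw [hGt]; simp [Matrix.mul_assoc]
    have : P⁻¹ * (Φᵀ * Q * B * L + Lᵀ * Bᵀ * Q * Φ - Sᵀ * P - P * S) * P⁻¹
        = G * L * P⁻¹ + P⁻¹ * (Lᵀ * Gᵀ) - P⁻¹ * Sᵀ - S * P⁻¹ := by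
      have e1 : P⁻¹ * (Φᵀ * Q * B * L + Lᵀ * Bᵀ * Q * Φ - Sᵀ * P - P * S) * P⁻¹
          = P⁻¹ * (Φᵀ * Q * B * L) * P⁻¹ + P⁻¹ * (Lᵀ * Bᵀ * Q * Φ) * P⁻¹
            - P⁻¹ * (Sᵀ * P) * P⁻¹ - P⁻¹ * (P * S) * P⁻¹ := by
        noncomm_ring
      rw [e1, hGL]
      have e2 : P⁻¹ * (Sᵀ * P) * P⁻¹ = P⁻¹ * Sᵀ := by
        rw [Matrix.mul_assoc, Matrix.mul_assoc, hPPi, Matrix.mul_one]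
      have e3 : P⁻¹ * (P * S) * P⁻¹ = S * P⁻¹ := by
        rw [← Matrix.mul_assoc, hPiP, Matrix.one_mul]
      have e4 : P⁻¹ * (Lᵀ * Bᵀ * Q * Φ) * P⁻¹ = P⁻¹ * (Lᵀ * Gᵀ) := by
        rw [← hLG]; noncomm_ring
      rw [e2, e3, e4]
    rw [this]
    simp only [Matrix.transpose_sub, Matrix.transpose_mul, Matrix.sub_mul,
      Matrix.mul_sub, Matrix.add_mul, Matrix.mul_add]
    module
  have hRpsd : Rt.PosSemidef := by
    rw [hkey]
    apply psd_smul_aux _ (by norm_num : (0:ℝ) ≤ 1/2)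
    have := hineq.mul_mul_conjTranspose_same (P⁻¹)
    simpa [Matrix.conjTranspose_eq_transpose_of_trivial, hPit] using this
  refine ⟨hJts, hRts, hRpsd, ?_, ?_⟩
  · rw [hJt, hRt, hQt]
    have : Jt - Rt = A * P⁻¹ := by rw [hJt, hRt]; module
    rw [← hJt, ← hRt, this, Matrix.mul_assoc, hPiP, Matrix.mul_one]
  · rw [hQt, hGP]
end
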